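/- arXiv:1608.04898 — 15 statements merged into one kernel-verified Lean document; each statement's English description precedes it below -/
import Mathlib

section
/- Every finite-dimensional alternative algebra over a field F is von-Neumann finite. -/
section AltAux

variable {A : Type*} [NonAssocRing A]

/-- Linearized left alternativity. -/
private lemma asS (hL : ∀ x y : A, (x * x) * y = x * (x * y)) (u v w : A) :
    ((u*v)*w - u*(v*w)) + ((v*u)*w - v*(u*w)) = 0 := by
  have h := hL (u + v) w
  simp only [add_mul, mul_add] at h
  linear_combination (norm := abel) h - hL u w - hL v w

/-- Linearized right alternativity. -/
private lemma asT (hR : ∀ x y : A, (x * y) * y = x * (y * y)) (u v w : A) :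
    ((u*v)*w - u*(v*w)) + ((u*w)*v - u*(w*v)) = 0 := by
  have h := hR u (v + w)
  simp only [add_mul, mul_add] at h
  linear_combination (norm := abel) h - hR u v - hR u w

private lemma asD1 (hL : ∀ x y : A, (x * x) * y = x * (x * y)) (u w : A) :
    (u*u)*w - u*(u*w) = 0 := sub_eq_zero_of_eq (hL u w)

private lemma asD2 (hR : ∀ x y : A, (x * y) * y = x * (y * y)) (u w : A) :
    (u*w)*w - u*(w*w) = 0 := sub_eq_zero_of_eq (hR u w)

private lemma lmul2 {p q : A} (m : A) (h : p - q = 0) : m*p - m*q = 0 := by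
  rw [← mul_sub, h, mul_zero]

private lemma rmul2 {p q : A} (m : A) (h : p - q = 0) : p*m - q*m = 0 := by
  rw [← sub_mul, h, zero_mul]

private lemma lmul4 {p q r s : A} (m : A) (h : (p - q) + (r - s) = 0) :
    (m*p - m*q) + (m*r - m*s) = 0 := by
  rw [← mul_sub, ← mul_sub, ← mul_add, h, mul_zero]

private lemma rmul4 {p q r s : A} (m : A) (h : (p - q) + (r - s) = 0) :
    (p*m - q*m) + (r*m - s*m) = 0 := by
  rw [← sub_mul, ← sub_mul, ← add_mul, h, zero_mul]

/-- Flexibility. -/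
private lemma flexLaw (hL : ∀ x y : A, (x * x) * y = x * (x * y))
    (hR : ∀ x y : A, (x * y) * y = x * (y * y)) (u v : A) :
    (u*v)*u = u*(v*u) := by
  linear_combination (norm := abel) asS hL u v u - hR v u

/-- Left Moufang identity. -/
private lemma moufangL (hL : ∀ x y : A, (x * x) * y = x * (x * y))
    (hR : ∀ x y : A, (x * y) * y = x * (y * y)) (x y z : A) :
    ((x*y)*x)*z = x*(y*(x*z)) := by
  linear_combination (norm := abel)
    rmul2 y (asD1 hL x z) + lmul4 x (asT hR x z y) + asT hR x y (x*z)
    - asT hR (x*x) y z + rmul2 z (asD1 hL x y) - asD1 hL x (z*y)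
    + asS hL (x*y) x z - asD1 hL x (y*z)

/-- Middle Moufang identity. -/
private lemma moufangM (hL : ∀ x y : A, (x * x) * y = x * (x * y))
    (hR : ∀ x y : A, (x * y) * y = x * (y * y)) (x y z : A) :
    (x*y)*(z*x) = (x*(y*z))*x := by
  linear_combination (norm := abel)
    asT hR z x (y*x) - asD2 hR (y*z) x - rmul4 x (asT hR y x z)
    + lmul2 y (asD1 hL x z) - asD2 hR (z*y) x - asS hL y z (x*x)
    + lmul2 z (asD2 hR y x) + lmul2 z (asD2 hR y x) + rmul4 x (asS hL y x z)
    - rmul4 x (asT hR z x y) - lmul4 z (asS hL x y x) - lmul4 y (asT hR x x z)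
    + lmul4 y (asS hL x z x) + asS hL (z*x) y x
    + rmul4 x (asS hL y z x) + rmul4 x (asS hL y z x) - asS hL (x*y) z x

/-- Left powers of an element. -/
private def lpow (a : A) : ℕ → A
  | 0 => 1
  | k+1 => a * lpow a k

@[simp] private lemma lpow_zero (a : A) : lpow a 0 = 1 := rfl

@[simp] private lemma lpow_succ (a : A) (k : ℕ) : lpow a (k+1) = a * lpow a k := rfl

private lemma lpow_comm (hL : ∀ x y : A, (x * x) * y = x * (x * y))
    (hR : ∀ x y : A, (x * y) * y = x * (y * y)) (a : A) :
    ∀ k, lpow a k * a = a * lpow a k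
  | 0 => by simp
  | k+1 => by
      rw [lpow_succ, flexLaw hL hR a (lpow a k), lpow_comm hL hR a k]

/-- `L_{a^{k+1}} = L_a ∘ L_{a^k}` together with commutation of `L_a` and `L_{a^k}`. -/
private lemma lpow_L (hL : ∀ x y : A, (x * x) * y = x * (x * y))
    (hR : ∀ x y : A, (x * y) * y = x * (y * y)) (a : A) :
    ∀ k, (∀ z, lpow a (k+1) * z = a * (lpow a k * z)) ∧
         (∀ z, lpow a k * (a * z) = a * (lpow a k * z)) := by
  intro k
  induction k with
  | zero => constructor <;> intro z <;> simp
  | succ k ih =>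
    obtain ⟨Pk, Qk⟩ := ih
    have Qk1 : ∀ z, lpow a (k+1) * (a * z) = a * (lpow a (k+1) * z) := by
      intro z
      rw [Pk (a * z), Qk z, Pk z]
    refine ⟨?_, Qk1⟩
    intro z
    have h1 : lpow a (k+2) * z = (lpow a (k+1) * a) * z := by
      rw [lpow_comm hL hR a (k+1)]; rfl
    rw [h1]
    have h2 : lpow a (k+1) * a = (a * lpow a k) * a := rfl
    rw [h2, moufangL hL hR a (lpow a k) z, Qk z, ← Pk z]

private lemma lpow_mul_b (hL : ∀ x y : A, (x * x) * y = x * (x * y))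
    (hR : ∀ x y : A, (x * y) * y = x * (y * y)) {a b : A} (hab : a * b = 1) :
    ∀ k, lpow a (k+1) * b = lpow a k
  | 0 => by simp [hab]
  | k+1 => by
      rw [(lpow_L hL hR a (k+1)).1 b, lpow_mul_b hL hR hab k]
      rfl

end AltAux

/-- Every finite-dimensional alternative algebra over a field `F` is von-Neumann finite. -/
theorem vonNeumannFinite_of_alternative_of_finiteDimensional
    (F : Type*) [Field F] (A : Type*) [NonAssocRing A] [Module F A]
    [SMulCommClass F A A] [IsScalarTower F A A] [FiniteDimensional F A]
    (alt_left : ∀ a b : A, (a * a) * b = a * (a * b))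
    (alt_right : ∀ a b : A, (a * b) * b = a * (b * b)) :
    ∀ a b : A, a * b = 1 → b * a = 1 := by
  intro a b hab
  classical
  -- Step 1: find a *left* inverse `y` of `a`, as a polynomial in `a`.
  have hnli : ¬ LinearIndependent F (fun k : ℕ => lpow a k) :=
    Module.Finite.not_linearIndependent_of_infinite _
  rw [linearIndependent_iff'] at hnli
  push_neg at hnli
  obtain ⟨s, g, hsum, i0, hi0s, hi0⟩ := hnli
  have hex : ∃ k, k ∈ s ∧ g k ≠ 0 := ⟨i0, hi0s, hi0⟩
  set d := Nat.find hex with hd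
  obtain ⟨hds, hgd⟩ := Nat.find_spec hex
  have hmin : ∀ k, k ∈ s → g k ≠ 0 → d ≤ k := fun k hk hgk => Nat.find_min' hex ⟨hk, hgk⟩
  -- strip off low-order terms by repeatedly multiplying by `b` on the right
  have strip : ∀ j, j ≤ d → ∑ k ∈ s, g k • lpow a (k - j) = 0 := by
    intro j
    induction j with
    | zero => intro _; simpa using hsum
    | succ j ih =>
      intro hj
      have h0 := ih (le_trans (Nat.le_succ j) hj)
      have h1 : (∑ k ∈ s, g k • lpow a (k - j)) * b = 0 := by rw [h0, zero_mul]
      rw [Finset.sum_mul] at h1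
      calc ∑ k ∈ s, g k • lpow a (k - (j+1))
          = ∑ k ∈ s, (g k • lpow a (k - j)) * b := by
            apply Finset.sum_congr rfl
            intro k hk
            by_cases hgk : g k = 0
            · simp [hgk]
            · have hdk : d ≤ k := hmin k hk hgk
              have h3 : k - j = (k - (j+1)) + 1 := by omega
              rw [smul_mul_assoc, h3, lpow_mul_b alt_left alt_right hab (k - (j+1))]
        _ = 0 := h1
  have hd0 := strip d le_rfl
  rw [← Finset.add_sum_erase s _ hds, Nat.sub_self] at hd0
  -- hd0 : g d • lpow a 0 + ∑ k ∈ s.erase d, g k • lpow a (k - d) = 0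
  have hT : (∑ k ∈ s.erase d, g k • lpow a (k - d)) = -(g d • (1 : A)) := by
    have := eq_neg_of_add_eq_zero_right hd0
    simpa using this
  set y : A := (-(g d)⁻¹) • ∑ k ∈ s.erase d, g k • lpow a (k - d - 1) with hy
  have hya : y * a = 1 := by
    rw [hy, smul_mul_assoc, Finset.sum_mul]
    have hsum2 : ∑ k ∈ s.erase d, (g k • lpow a (k - d - 1)) * a
        = ∑ k ∈ s.erase d, g k • lpow a (k - d) := by
      apply Finset.sum_congr rfl
      intro k hk
      by_cases hgk : g k = 0
      · simp [hgk]
      · have hk' : k ∈ s := Finset.mem_of_mem_erase hk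
        have hkd : k ≠ d := Finset.ne_of_mem_erase hk
        have hdk : d ≤ k := hmin k hk' hgk
        have h4 : k - d - 1 + 1 = k - d := by omega
        rw [smul_mul_assoc, lpow_comm alt_left alt_right a (k - d - 1)]
        rw [← lpow_succ, h4]
    rw [hsum2, hT]
    rw [smul_neg, neg_smul, neg_neg, smul_smul, inv_mul_cancel₀ hgd, one_smul]
  -- Step 2: Moufang magic. First, `b * y = b * b`.
  have hby : b * y = b * b := by
    have h := moufangM alt_left alt_right b y a
    -- h : (b*y)*(a*b) = (b*(y*a))*b
    rw [hab, hya, mul_one, mul_one] at h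
    exact h
  -- Then apply the middle Moufang identity to `(a, b, y - b)`.
  have h2 := moufangM alt_left alt_right a b (y - b)
  -- h2 : (a*b)*((y-b)*a) = (a*(b*(y-b)))*a
  rw [hab, one_mul, mul_sub, hby, sub_self, mul_zero, zero_mul] at h2
  -- h2 : (y - b) * a = 0
  rw [sub_mul, hya, sub_eq_zero] at h2
  exact h2.symm
end

section
/- Every reversible alternative algebra over a field F is von-Neumann finite. -/
/-- Every reversible alternative algebra over a field `F` is von-Neumann finite. -/
theorem vonNeumannFinite_of_alternative_of_reversible
    (F : Type*) [Field F] (A : Type*) [NonAssocRing A] [Module F A]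
    [SMulCommClass F A A] [IsScalarTower F A A]
    (alt_left : ∀ a b : A, (a * a) * b = a * (a * b))
    (alt_right : ∀ a b : A, (a * b) * b = a * (b * b))
    (hrev : ∀ a b : A, a * b = 0 → b * a = 0) :
    ∀ a b : A, a * b = 1 → b * a = 1 := by
  -- Flexible law from alternativity.
  have flex : ∀ x y : A, (x * y) * x = x * (y * x) := by
    intro x y
    have h := alt_left (x + y) x
    simp only [add_mul, mul_add] at h
    rw [alt_left x x, alt_left y x, alt_right y x] at h
    have h' := sub_eq_zero_of_eq h
    abel_nf at h'
    rw [neg_one_smul, ← sub_eq_add_neg, sub_eq_zero] at h'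
    exact h'
  intro a b hab
  have h1 : (b * a) * b = b := by rw [flex b a, hab, mul_one]
  have h2 : b * (b * a) = b := by
    have h0 : ((b * a) - 1) * b = 0 := by rw [sub_mul, one_mul, h1, sub_self]
    have h0' := hrev _ _ h0
    rw [mul_sub, mul_one, sub_eq_zero] at h0'
    exact h0'
  -- Teichmüller identity instance with (w,x,y,z) = (a,b,b,a)
  have z1 : a*((b*b)*a - b*(b*a)) = 0 := by rw [alt_left b a, sub_self, mul_zero]
  have z2 : ((a*b)*b - a*(b*b))*a = 0 := by rw [alt_right a b, sub_self, zero_mul]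
  have z3 : ((a*b)*b)*a - (a*b)*(b*a) = 0 := by rw [hab, one_mul, one_mul, sub_self]
  have z4 : (a*(b*b))*a - a*((b*b)*a) = 0 := by rw [flex a (b*b), sub_self]
  have key : (a*b)*(b*a) - a*(b*(b*a)) =
      (a*((b*b)*a - b*(b*a))) + (((a*b)*b - a*(b*b))*a)
      - (((a*b)*b)*a - (a*b)*(b*a)) + ((a*(b*b))*a - a*((b*b)*a)) := by
    simp only [mul_sub, sub_mul]
    abel
  rw [z1, z2, z3, z4] at key
  simp only [add_zero, zero_add, sub_zero] at key
  rw [hab, one_mul, h2, hab, sub_eq_zero] at key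
  exact key
end

section
/- Every quadratic F-algebra without zero divisors is von-Neumann finite. (Here 'without zero divisors' means: ab = 0 implies a = 0 or b = 0.) -/
/-- Every quadratic algebra without zero divisors is von-Neumann finite. -/
theorem vonNeumannFinite_of_quadratic_of_noZeroDivisors
    (F : Type*) [Field F] (A : Type*) [NonAssocRing A] [Module F A]
    [SMulCommClass F A A] [IsScalarTower F A A]
    (hquad : ∀ a : A, ¬ LinearIndependent F ![(1 : A), a, a * a])
    (hnzd : ∀ a b : A, a * b = 0 → a = 0 ∨ b = 0) :
    ∀ a b : A, a * b = 1 → b * a = 1 := by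
  intro a b hab
  by_cases h10 : (1 : A) = 0
  · have : Subsingleton A := subsingleton_of_zero_eq_one h10.symm
    exact Subsingleton.elim _ _
  have ha0 : a ≠ 0 := by rintro rfl; rw [zero_mul] at hab; exact h10 hab.symm
  have scalar_case : ∀ α : F, a = α • (1 : A) → b * a = 1 := by
    intro α hα
    have hα0 : α ≠ 0 := by rintro rfl; rw [zero_smul] at hα; exact ha0 hα
    have hb : α • b = 1 := by
      have : a * b = α • ((1 : A) * b) := by rw [hα, smul_mul_assoc]
      rw [hab, one_mul] at this; exact this.symm
    have hb' : b = α⁻¹ • (1 : A) := by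
      have := congrArg (α⁻¹ • ·) hb
      simpa [smul_smul, inv_mul_cancel₀ hα0] using this
    rw [hb', hα, smul_mul_assoc, mul_smul_comm, mul_one, smul_smul,
      inv_mul_cancel₀ hα0, one_smul]
  obtain ⟨g, hsum, i, hi⟩ := Fintype.not_linearIndependent_iff.mp (hquad a)
  rw [Fin.sum_univ_three] at hsum
  simp only [Matrix.cons_val_zero, Matrix.cons_val_one, Matrix.head_cons,
    Matrix.cons_val_two, Matrix.tail_cons] at hsum
  by_cases h2 : g 2 = 0
  · rw [h2, zero_smul, add_zero] at hsum
    by_cases h1 : g 1 = 0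
    · rw [h1, zero_smul, add_zero] at hsum
      have h0 : g 0 ≠ 0 := by fin_cases i <;> simp_all
      exact absurd (by simpa [smul_eq_zero, h0] using hsum : (1 : A) = 0) h10
    · apply scalar_case (-(g 1)⁻¹ * g 0)
      have := congrArg ((g 1)⁻¹ • ·) hsum
      simp only [smul_add, smul_smul, inv_mul_cancel₀ h1, one_smul, smul_zero] at this
      have : a = -((g 1)⁻¹ * g 0) • (1 : A) := by
        rw [neg_smul]
        linear_combination (norm := module) this
      simpa [neg_mul] using this
  · set p : F := -((g 2)⁻¹ * g 1) with hp
    set q : F := -((g 2)⁻¹ * g 0) with hqdef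
    have hq : a * a = p • a + q • (1 : A) := by
      have := congrArg ((g 2)⁻¹ • ·) hsum
      simp only [smul_add, smul_smul, inv_mul_cancel₀ h2, one_smul, smul_zero] at this
      linear_combination (norm := module) this
    by_cases hq0 : q = 0
    · have hfac : a * (a - p • (1 : A)) = 0 := by
        rw [mul_sub, mul_smul_comm, mul_one, hq, hq0, zero_smul, add_zero, sub_self]
      rcases hnzd _ _ hfac with h | h
      · exact absurd h ha0
      · exact scalar_case p (by linear_combination (norm := module) h)
    · have hx : a * (q • b - a + p • (1 : A)) = 0 := by
        rw [mul_add, mul_sub, mul_smul_comm, mul_smul_comm, mul_one, hab, hq]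
        abel
      rcases hnzd _ _ hx with h | h
      · exact absurd h ha0
      · have hb : b = q⁻¹ • (a - p • (1 : A)) := by
          have := congrArg (q⁻¹ • ·) (show q • b = a - p • (1:A) by
            linear_combination (norm := module) h)
          simpa [smul_smul, inv_mul_cancel₀ hq0] using this
        rw [hb, smul_mul_assoc, sub_mul, smul_mul_assoc, one_mul, hq]
        rw [show p • a + q • (1 : A) - p • a = q • (1 : A) by abel,
          smul_smul, inv_mul_cancel₀ hq0, one_smul]
end

section
/- Let F be a field of characteristic different from 2 and let A be a flexible involutive F-algebra with involution σ and norm n : A → F (defined by a·σ(a) = n(a)·1). If for every 3-dimensional subalgebra B of A the restriction of n to B is non-degenerate (i.e., the radical {x ∈ B : ⟨x, y⟩ = 0 for all y ∈ B} of the associated bilinear form ⟨x, y⟩ = n(x+y) − n(x) − n(y) on B is either zero, or is 1-dimensional and n does not vanish on it), then A is von-Neumann finite and reversible. -/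
/-- A flexible involutive algebra over a field of characteristic ≠ 2 whose norm is
non-degenerate on every 3-dimensional subalgebra is von-Neumann finite and reversible. -/
theorem vonNeumannFinite_and_reversible_of_flexible_involutive
    (F : Type*) [Field F] (A : Type*) [NonAssocRing A] [Module F A]
    [SMulCommClass F A A] [IsScalarTower F A A]
    (hchar : (2 : F) ≠ 0)
    (flex : ∀ a b : A, a * (b * a) = (a * b) * a)
    (σ : A →ₗ[F] A)
    (hanti : ∀ a b : A, σ (a * b) = σ b * σ a)
    (hinvol : ∀ a : A, σ (σ a) = a)
    (htrace : ∀ a : A, ∃ c : F, a + σ a = c • (1 : A))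
    (n : A → F)
    (hnorm : ∀ a : A, a * σ a = n a • (1 : A))
    (hnondeg : ∀ B : Submodule F A, (1 : A) ∈ B →
      (∀ x ∈ B, ∀ y ∈ B, x * y ∈ B) → Module.finrank F B = 3 →
      ({x : A | x ∈ B ∧ ∀ y ∈ B, n (x + y) - n x - n y = 0} = {0} ∨
        ((∃ z : A, z ≠ 0 ∧
            {x : A | x ∈ B ∧ ∀ y ∈ B, n (x + y) - n x - n y = 0} =
              {x : A | ∃ c : F, x = c • z}) ∧
          ∃ x ∈ {x : A | x ∈ B ∧ ∀ y ∈ B, n (x + y) - n x - n y = 0}, n x ≠ 0))) :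
    (∀ a b : A, a * b = 1 → b * a = 1) ∧ (∀ a b : A, a * b = 0 → b * a = 0) := by
  classical
  by_cases h1 : (1 : A) = 0
  · have hall : ∀ x : A, x = 0 := fun x => by rw [← mul_one x, h1, mul_zero]
    exact ⟨fun a b _ => (hall _).trans (hall 1).symm, fun a b _ => hall _⟩
  -- choose the trace
  choose t ht using htrace
  -- scalars embed injectively
  have hinj : ∀ c : F, c • (1 : A) = 0 → c = 0 := by
    intro c hc
    by_contra h
    exact h1 (by rw [show (1:A) = c⁻¹ • (c • (1:A)) by rw [smul_smul, inv_mul_cancel₀ h, one_smul],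
      hc, smul_zero])
  have hinj2 : ∀ c d : F, c • (1 : A) = d • (1 : A) → c = d := by
    intro c d h
    have := hinj (c - d) (by rw [sub_smul, h, sub_self])
    exact sub_eq_zero.mp this
  -- σ 1 = 1
  have hn1 : σ 1 = n 1 • (1 : A) := by have := hnorm 1; rwa [one_mul] at this
  have e1' : n 1 * n 1 = 1 := by
    apply hinj2
    calc (n 1 * n 1) • (1:A) = n 1 • (n 1 • (1:A)) := by rw [smul_smul]
      _ = n 1 • σ 1 := by rw [hn1]
      _ = σ (n 1 • (1:A)) := by rw [map_smul]
      _ = σ (σ 1) := by rw [hn1]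
      _ = 1 := hinvol 1
      _ = (1:F) • (1:A) := (one_smul F (1:A)).symm
  have e2' : n 1 = n 1 * n 1 := by
    apply hinj2
    calc n 1 • (1:A) = σ 1 := hn1.symm
      _ = σ (1 * 1) := by rw [one_mul]
      _ = σ 1 * σ 1 := hanti 1 1
      _ = (n 1 • (1:A)) * (n 1 • (1:A)) := by rw [hn1]
      _ = (n 1 * n 1) • (1:A) := by
          rw [smul_mul_assoc, mul_smul_comm, one_mul, smul_smul]
  have hσ1 : σ (1 : A) = 1 := by
    rw [hn1, e2'.trans e1', one_smul]
  -- σ in terms of trace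
  have hσ : ∀ x : A, σ x = t x • (1 : A) - x := fun x => eq_sub_of_add_eq' (ht x)
  -- quadratic identity
  have quad : ∀ x : A, x * x = t x • x - n x • (1 : A) := by
    intro x
    have h := hnorm x
    rw [hσ x, mul_sub, mul_smul_comm, mul_one] at h
    linear_combination (norm := module) -h
  -- polarization
  have bform : ∀ x y : A, (n (x + y) - n x - n y) • (1 : A) = x * σ y + y * σ x := by
    intro x y
    have h := hnorm (x + y)
    rw [map_add, add_mul, mul_add, mul_add, hnorm x, hnorm y] at h
    linear_combination (norm := module) -h
  -- squared norm of a scalar multiple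
  have nsmul : ∀ (c : F) (x : A), n (c • x) = c * c * n x := by
    intro c x
    apply hinj2
    calc n (c • x) • (1:A) = (c • x) * σ (c • x) := (hnorm _).symm
      _ = c • (c • (x * σ x)) := by rw [map_smul, mul_smul_comm, smul_mul_assoc]
      _ = c • (c • (n x • (1:A))) := by rw [hnorm x]
      _ = (c * c * n x) • (1:A) := by rw [smul_smul, smul_smul]
  -- main lemma
  have main : ∀ (ε : F) (a b : A), a * b = ε • (1 : A) → b * a = ε • (1 : A) := by
    intro ε a b hab
    by_cases hb : ∃ c d : F, c • (1:A) + d • a = b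
    · obtain ⟨c, d, rfl⟩ := hb
      have h2 : (c • (1:A) + d • a) * a = a * (c • (1:A) + d • a) := by
        rw [add_mul, mul_add, smul_mul_assoc, one_mul, mul_smul_comm, mul_one,
          smul_mul_assoc, mul_smul_comm]
      rw [h2, hab]
    by_cases ha : ∃ c d : F, c • (1:A) + d • b = a
    · obtain ⟨c, d, rfl⟩ := ha
      have h2 : b * (c • (1:A) + d • b) = (c • (1:A) + d • b) * b := by
        rw [add_mul, mul_add, smul_mul_assoc, one_mul, mul_smul_comm, mul_one,
          smul_mul_assoc, mul_smul_comm]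
      rw [h2, hab]
    -- the independent case
    obtain ⟨α, hα⟩ : ∃ c : F, t a = c := ⟨_, rfl⟩
    obtain ⟨β, hβ⟩ : ∃ c : F, t b = c := ⟨_, rfl⟩
    obtain ⟨γ, hγ⟩ : ∃ c : F, n (a + b) - n a - n b + 2 * ε = c := ⟨_, rfl⟩
    obtain ⟨f, hfdef⟩ : ∃ f : A, b * a - ε • (1:A) = f := ⟨_, rfl⟩
    -- pairwise independence
    have inda : ∀ c d : F, c • (1:A) + d • a = 0 → c = 0 ∧ d = 0 := by
      intro c d h
      by_cases hd : d = 0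
      · subst hd
        rw [zero_smul, add_zero] at h
        exact ⟨hinj c h, rfl⟩
      · exfalso
        apply ha
        refine ⟨-(d⁻¹ * c), 0, ?_⟩
        rw [zero_smul, add_zero,
          show a = d⁻¹ • (d • a) by rw [smul_smul, inv_mul_cancel₀ hd, one_smul],
          show d • a = -(c • (1:A)) by linear_combination (norm := module) h,
          smul_neg, smul_smul, neg_smul]
    have indb : ∀ c d : F, c • (1:A) + d • b = 0 → c = 0 ∧ d = 0 := by
      intro c d h
      by_cases hd : d = 0
      · subst hd
        rw [zero_smul, add_zero] at h
        exact ⟨hinj c h, rfl⟩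
      · exfalso
        apply hb
        refine ⟨-(d⁻¹ * c), 0, ?_⟩
        rw [zero_smul, add_zero,
          show b = d⁻¹ • (d • b) by rw [smul_smul, inv_mul_cancel₀ hd, one_smul],
          show d • b = -(c • (1:A)) by linear_combination (norm := module) h,
          smul_neg, smul_smul, neg_smul]
    -- b * a in coordinates
    have hba' : b * a = β • a + α • b - γ • (1:A) + ε • (1:A) := by
      have k := bform a b
      rw [hσ a, hσ b, hα, hβ, mul_sub, mul_sub, mul_smul_comm, mul_smul_comm, mul_one,
        mul_one, hab] at k
      linear_combination (norm := module) k - hγ • (1:A)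
    have hf : f = β • a + α • b - γ • (1:A) := by
      rw [← hfdef, hba']
      module
    -- flexibility facts
    have haf : a * f = 0 := by
      rw [← hfdef, mul_sub, flex a b, hab, mul_smul_comm, mul_one, smul_mul_assoc,
        one_mul, sub_self]
    have hfb : f * b = 0 := by
      rw [← hfdef, sub_mul, ← flex b a, hab, mul_smul_comm, mul_one, smul_mul_assoc,
        one_mul, sub_self]
    -- the constraints
    have expand_af : a * f = (α * ε - β * n a) • (1:A) + (β * α - γ) • a := by
      rw [hf, mul_sub, mul_add, mul_smul_comm, mul_smul_comm, mul_smul_comm, mul_one,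
        quad a, hα, hab]
      module
    have e12 := inda _ _ (by rw [← expand_af]; exact haf)
    have e1 : α * ε - β * n a = 0 := e12.1
    have e2 : β * α - γ = 0 := e12.2
    have expand_fb : f * b = (β * ε - α * n b) • (1:A) + (α * β - γ) • b := by
      rw [hf, sub_mul, add_mul, smul_mul_assoc, smul_mul_assoc, smul_mul_assoc, one_mul,
        quad b, hβ, hab]
      module
    have e3 : β * ε - α * n b = 0 :=
      (indb _ _ (by rw [← expand_fb]; exact hfb)).1
    -- multiplication facts for f
    have hfa : f * a = α • f := by
      rw [hf, sub_mul, add_mul, smul_mul_assoc, smul_mul_assoc, smul_mul_assoc, one_mul,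
        quad a, hα, hba']
      linear_combination (norm := module) e1 • (1:A) + e2 • a
    have hbf : b * f = β • f := by
      rw [hf, mul_sub, mul_add, mul_smul_comm, mul_smul_comm, mul_smul_comm, mul_one,
        quad b, hβ, hba']
      linear_combination (norm := module) e3 • (1:A) + e2 • b
    have hσf : σ f = -f := by
      rw [hf, map_sub, map_add, map_smul, map_smul, map_smul, hσ a, hσ b, hσ1, hα, hβ]
      linear_combination (norm := module) e2 • ((2:F) • (1:A))
    have hff : f * f = 0 := by
      calc f * f = f * (β • a + α • b - γ • (1:A)) := by rw [← hf]
        _ = β • (f * a) + α • (f * b) - γ • (f * 1) := by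
            rw [mul_sub, mul_add, mul_smul_comm, mul_smul_comm, mul_smul_comm]
        _ = β • (α • f) + α • (0:A) - γ • f := by rw [hfa, hfb, mul_one]
        _ = (β * α - γ) • f := by module
        _ = 0 := by rw [e2, zero_smul]
    have hnf : n f = 0 := hinj _ (by rw [← hnorm f, hσf, mul_neg, hff, neg_zero])
    -- the subalgebra B
    set B := Submodule.span F ({(1:A), a, b} : Set A) with hBdef
    have hmem1 : (1:A) ∈ B := Submodule.subset_span (by simp)
    have hmema : a ∈ B := Submodule.subset_span (by simp)
    have hmemb : b ∈ B := Submodule.subset_span (by simp)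
    have hmemf : f ∈ B := by
      rw [hf]
      exact sub_mem (add_mem (Submodule.smul_mem _ _ hmema) (Submodule.smul_mem _ _ hmemb))
        (Submodule.smul_mem _ _ hmem1)
    have hgen : ∀ x ∈ ({(1:A), a, b} : Set A), ∀ y ∈ ({(1:A), a, b} : Set A), x * y ∈ B := by
      intro x hx y hy
      simp only [Set.mem_insert_iff, Set.mem_singleton_iff] at hx hy
      rcases hx with hx | hx | hx <;> rcases hy with hy | hy | hy <;> rw [hx, hy]
      · rw [one_mul]; exact hmem1
      · rw [one_mul]; exact hmema
      · rw [one_mul]; exact hmemb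
      · rw [mul_one]; exact hmema
      · rw [quad a, hα]
        exact sub_mem (Submodule.smul_mem _ _ hmema) (Submodule.smul_mem _ _ hmem1)
      · rw [hab]; exact Submodule.smul_mem _ _ hmem1
      · rw [mul_one]; exact hmemb
      · rw [hba']
        exact add_mem (sub_mem (add_mem (Submodule.smul_mem _ _ hmema)
          (Submodule.smul_mem _ _ hmemb)) (Submodule.smul_mem _ _ hmem1))
          (Submodule.smul_mem _ _ hmem1)
      · rw [quad b, hβ]
        exact sub_mem (Submodule.smul_mem _ _ hmemb) (Submodule.smul_mem _ _ hmem1)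
    have hclosed : ∀ x ∈ B, ∀ y ∈ B, x * y ∈ B := by
      have step : ∀ x ∈ ({(1:A), a, b} : Set A), ∀ y ∈ B, x * y ∈ B := by
        intro x hx y hy
        induction hy using Submodule.span_induction with
        | mem z hz => exact hgen x hx z hz
        | zero => rw [mul_zero]; exact zero_mem _
        | add u v _ _ hu hv => rw [mul_add]; exact add_mem hu hv
        | smul c u _ hu => rw [mul_smul_comm]; exact Submodule.smul_mem _ c hu
      intro x hx y hy
      induction hx using Submodule.span_induction with
      | mem z hz => exact step z hz y hy
      | zero => rw [zero_mul]; exact zero_mem _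
      | add u v _ _ hu hv => rw [add_mul]; exact add_mem hu hv
      | smul c u _ hu => rw [smul_mul_assoc]; exact Submodule.smul_mem _ c hu
    -- linear independence and rank
    have hind : LinearIndependent F ![(1:A), a, b] := by
      rw [Fintype.linearIndependent_iff]
      intro g hg
      simp only [Fin.sum_univ_three, Matrix.cons_val_zero, Matrix.cons_val_one,
        Matrix.head_cons, Matrix.cons_val_two, Matrix.tail_cons] at hg
      by_cases h2 : g 2 = 0
      · rw [h2, zero_smul, add_zero] at hg
        have h01 := inda _ _ hg
        intro i
        fin_cases i
        · exact h01.1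
        · exact h01.2
        · exact h2
      · exfalso
        apply hb
        refine ⟨-((g 2)⁻¹ * g 0), -((g 2)⁻¹ * g 1), ?_⟩
        rw [show b = (g 2)⁻¹ • (g 2 • b) by rw [smul_smul, inv_mul_cancel₀ h2, one_smul],
          show g 2 • b = -(g 0 • (1:A)) - g 1 • a by linear_combination (norm := module) hg]
        rw [smul_sub, smul_neg, smul_smul, smul_smul, neg_smul, neg_smul]
        module
    have hrank : Module.finrank F B = 3 := by
      have hsets : ({(1:A), a, b} : Set A) = Set.range ![(1:A), a, b] := by
        ext x; simp [Matrix.range_cons, Matrix.range_empty]; tauto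
      rw [hBdef, hsets]
      have := finrank_span_eq_card hind
      simpa using this
    -- f lies in the radical
    have hradlin : ∀ y ∈ B, f * σ y + y * σ f = 0 := by
      intro y hy
      induction hy using Submodule.span_induction with
      | mem z hz =>
        simp only [Set.mem_insert_iff, Set.mem_singleton_iff] at hz
        rcases hz with hz | hz | hz <;> rw [hz]
        · rw [hσ1, mul_one, one_mul, hσf]; abel
        · rw [hσ a, hα, hσf, mul_sub, mul_smul_comm, mul_one, mul_neg, haf, hfa]; abel
        · rw [hσ b, hβ, hσf, mul_sub, mul_smul_comm, mul_one, mul_neg, hfb, hbf]; abel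
      | zero => rw [map_zero, mul_zero, zero_mul, add_zero]
      | add u v _ _ hu hv =>
        rw [map_add, mul_add, add_mul]
        linear_combination (norm := module) hu + hv
      | smul c u _ hu =>
        rw [map_smul, mul_smul_comm, smul_mul_assoc]
        linear_combination (norm := module) c • hu
    have hfS : f ∈ {x : A | x ∈ B ∧ ∀ y ∈ B, n (x + y) - n x - n y = 0} := by
      refine ⟨hmemf, fun y hy => hinj _ ?_⟩
      rw [bform f y]
      exact hradlin y hy
    -- apply nondegeneracy
    have hf0 : f = 0 := by
      rcases hnondeg B hmem1 hclosed hrank with hS | ⟨⟨z, hz0, hSeq⟩, x₀, hx₀S, hnx₀⟩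
      · have := hS ▸ hfS
        simpa using this
      · rw [hSeq] at hfS hx₀S
        obtain ⟨c, hc⟩ := hfS
        obtain ⟨c₀, hc₀⟩ := hx₀S
        have hnz : n z ≠ 0 := by
          intro h
          exact hnx₀ (by rw [hc₀, nsmul, h, mul_zero])
        have hcc : c * c * n z = 0 := by rw [← nsmul, ← hc, hnf]
        have hc0 : c = 0 := by
          by_contra hcne
          exact (mul_ne_zero (mul_ne_zero hcne hcne) hnz) hcc
        rw [hc, hc0, zero_smul]
    have : b * a - ε • (1:A) = 0 := by rw [hfdef]; exact hf0
    exact sub_eq_zero.mp this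
  constructor
  · intro a b hab
    have := main 1 a b (by rw [hab, one_smul])
    rwa [one_smul] at this
  · intro a b hab
    have := main 0 a b (by rw [hab, zero_smul])
    rwa [zero_smul] at this
end

section
/- Let F be a field of characteristic different from 2 and let A be a flexible involutive F-algebra with involution σ whose norm n : A → F (defined by a·σ(a) = n(a)·1) is anisotropic, i.e., n(a) = 0 implies a = 0. Then A is von-Neumann finite and reversible. -/
/-- A flexible involutive algebra over a field of characteristic ≠ 2 with anisotropic
norm is von-Neumann finite and reversible. -/
theorem vonNeumannFinite_and_reversible_of_flexible_involutive_anisotropic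
    (F : Type*) [Field F] (A : Type*) [NonAssocRing A] [Module F A]
    [SMulCommClass F A A] [IsScalarTower F A A]
    (hchar : (2 : F) ≠ 0)
    (flex : ∀ a b : A, a * (b * a) = (a * b) * a)
    (σ : A →ₗ[F] A)
    (hanti : ∀ a b : A, σ (a * b) = σ b * σ a)
    (hinvol : ∀ a : A, σ (σ a) = a)
    (htrace : ∀ a : A, ∃ c : F, a + σ a = c • (1 : A))
    (n : A → F)
    (hnorm : ∀ a : A, a * σ a = n a • (1 : A))
    (haniso : ∀ a : A, n a = 0 → a = 0) :
    (∀ a b : A, a * b = 1 → b * a = 1) ∧ (∀ a b : A, a * b = 0 → b * a = 0) := by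
  by_cases htriv : (1 : A) = 0
  · have hA : ∀ x : A, x = 0 := fun x => by
      calc x = x * 1 := (mul_one x).symm
      _ = x * 0 := by rw [htriv]
      _ = 0 := mul_zero x
    exact ⟨fun a b _ => (hA _).trans htriv.symm, fun a b _ => hA _⟩
  · have hinj : ∀ c : F, c • (1 : A) = 0 → c = 0 := by
      intro c hc
      by_contra h
      exact htriv (by
        calc (1:A) = c⁻¹ • c • (1:A) := by rw [smul_smul, inv_mul_cancel₀ h, one_smul]
        _ = 0 := by rw [hc, smul_zero])
    obtain ⟨s, hs⟩ := htrace 1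
    have hσ1 : σ 1 = 1 := by
      have h11 : σ 1 = σ 1 * σ 1 := by have := hanti 1 1; rwa [one_mul] at this
      have hs1 : σ 1 = (s - 1) • (1:A) := by
        rw [sub_smul, one_smul, ← hs]; abel
      rw [hs1, smul_mul_assoc, mul_smul_comm, one_mul, smul_smul] at h11
      have hu : ((s-1) - (s-1)*(s-1)) • (1:A) = 0 := by
        rw [sub_smul, h11, sub_self]
      have hu' := hinj _ hu
      rcases mul_eq_zero.1 (show (s-1) * (1 - (s-1)) = 0 by linear_combination hu') with h0 | h0
      · exfalso
        apply htriv
        have : σ (1:A) = 0 := by rw [hs1, h0, zero_smul]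
        have h2 := hinvol 1
        rw [this, map_zero] at h2
        exact h2.symm
      · have : s - 1 = 1 := by linear_combination -h0
        rw [hs1, this, one_smul]
    constructor
    · intro a b hab
      obtain ⟨ta, hta⟩ := htrace a
      obtain ⟨tb, htb⟩ := htrace b
      have hσa : σ a = ta • (1:A) - a := by rw [← hta]; abel
      have hσb : σ b = tb • (1:A) - b := by rw [← htb]; abel
      have hsq_a : a * a = ta • a - n a • (1:A) := by
        have h := hnorm a
        rw [hσa, mul_sub, mul_smul_comm, mul_one] at h
        rw [eq_sub_iff_add_eq, ← h]; abel
      have hsq_b : b * b = tb • b - n b • (1:A) := by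
        have h := hnorm b
        rw [hσb, mul_sub, mul_smul_comm, mul_one] at h
        rw [eq_sub_iff_add_eq, ← h]; abel
      have hba : b * a = 1 + tb • a + ta • b - (tb * ta) • (1:A) := by
        have h := hanti a b
        rw [hab, hσ1, hσa, hσb] at h
        simp only [sub_mul, mul_sub, smul_mul_assoc, mul_smul_comm, smul_smul,
          one_mul, mul_one] at h
        linear_combination (norm := module) -h
      have h2 : a * (b * a) = a := by rw [flex, hab, one_mul]
      rw [hba] at h2
      simp only [mul_add, mul_sub, mul_smul_comm, mul_one] at h2
      rw [hsq_a, hab] at h2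
      have hta2 : ta = tb * n a := by
        have h0 : (ta - tb * n a) • (1:A) = 0 := by
          linear_combination (norm := module) h2
        linear_combination hinj _ h0
      have h3 : (b * a) * b = b := by rw [← flex, hab, mul_one]
      rw [hba] at h3
      simp only [add_mul, sub_mul, smul_mul_assoc, one_mul] at h3
      rw [hsq_b, hab] at h3
      have htb2 : tb = ta * n b := by
        have h0 : (tb - ta * n b) • (1:A) = 0 := by
          linear_combination (norm := module) h3
        linear_combination hinj _ h0
      have hσy : σ (b * a - 1) = (tb * ta) • (1:A) - tb • a - ta • b := by
        rw [map_sub, hanti b a, hσ1, hσa, hσb]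
        simp only [sub_mul, mul_sub, smul_mul_assoc, mul_smul_comm, smul_smul,
          one_mul, mul_one]
        linear_combination (norm := module) hab
      have hy2 : (b * a - 1) * σ (b * a - 1) = 0 := by
        rw [hσy, hba]
        simp only [sub_mul, add_mul, mul_sub, mul_add, smul_mul_assoc, mul_smul_comm,
          smul_smul, one_mul, mul_one]
        rw [hsq_a, hsq_b, hab, hba]
        have hkey : tb * ta * 2 - tb ^ 2 * n a - ta ^ 2 * n b = 0 := by
          linear_combination tb * hta2 + ta * htb2
        match_scalars
        · linear_combination (-1 : F) * hkey
        · ring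
        · ring
      have h0 := hinj _ ((hnorm _).symm.trans hy2)
      have hfin := haniso _ h0
      exact sub_eq_zero.1 hfin
    · intro a b hab
      rcases eq_or_ne a 0 with rfl | ha0
      · rw [mul_zero]
      rcases eq_or_ne b 0 with rfl | hb0
      · rw [zero_mul]
      obtain ⟨ta, hta⟩ := htrace a
      obtain ⟨tb, htb⟩ := htrace b
      have hσa : σ a = ta • (1:A) - a := by rw [← hta]; abel
      have hσb : σ b = tb • (1:A) - b := by rw [← htb]; abel
      have hsq_a : a * a = ta • a - n a • (1:A) := by
        have h := hnorm a
        rw [hσa, mul_sub, mul_smul_comm, mul_one] at h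
        rw [eq_sub_iff_add_eq, ← h]; abel
      have hsq_b : b * b = tb • b - n b • (1:A) := by
        have h := hnorm b
        rw [hσb, mul_sub, mul_smul_comm, mul_one] at h
        rw [eq_sub_iff_add_eq, ← h]; abel
      have hba : b * a = tb • a + ta • b - (tb * ta) • (1:A) := by
        have h := hanti a b
        rw [hab, map_zero, hσa, hσb] at h
        simp only [sub_mul, mul_sub, smul_mul_assoc, mul_smul_comm, smul_smul,
          one_mul, mul_one] at h
        linear_combination (norm := module) -h
      have h2 : a * (b * a) = 0 := by rw [flex, hab, zero_mul]
      rw [hba] at h2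
      simp only [mul_add, mul_sub, mul_smul_comm, mul_one] at h2
      rw [hsq_a, hab] at h2
      have htb1 : tb = 0 := by
        have h0 : (tb * n a) • (1:A) = 0 := by
          linear_combination (norm := module) -h2
        rcases mul_eq_zero.1 (hinj _ h0) with h | h
        · exact h
        · exact absurd (haniso a h) ha0
      have h3 : (b * a) * b = 0 := by rw [← flex, hab, mul_zero]
      rw [hba] at h3
      simp only [add_mul, sub_mul, smul_mul_assoc, one_mul] at h3
      rw [hsq_b, hab] at h3
      have hta1 : ta = 0 := by
        have h0 : (ta * n b) • (1:A) = 0 := by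
          linear_combination (norm := module) -h3
        rcases mul_eq_zero.1 (hinj _ h0) with h | h
        · exact h
        · exact absurd (haniso b h) hb0
      rw [hba, hta1, htb1]
      simp
end

section
/- Let F be a field of characteristic different from 2 and let A be an involutive F-algebra. Then A is von-Neumann finite if and only if every 3-dimensional subalgebra of A is either commutative or associative. -/
set_option linter.unusedSectionVars false
set_option linter.unusedVariables false
set_option maxHeartbeats 1000000

section VNFHelpers

variable {F : Type*} [Field F] {A : Type*} [NonAssocRing A] [Module F A]
    [SMulCommClass F A A] [IsScalarTower F A A]

private lemma memSpanTriple {x a b c : A} (h : x ∈ Submodule.span F ({a, b, c} : Set A)) :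
    ∃ p q r : F, x = p•a + q•b + r•c := by
  rw [Submodule.mem_span_insert] at h
  obtain ⟨p, z, hz, rfl⟩ := h
  rw [Submodule.mem_span_pair] at hz
  obtain ⟨q, r, rfl⟩ := hz
  exact ⟨p, q, r, by rw [add_assoc]⟩

private lemma sigmaOne (σ : A →ₗ[F] A)
    (hanti : ∀ a b : A, σ (a * b) = σ b * σ a)
    (hinvol : ∀ a : A, σ (σ a) = a)
    (htrace : ∀ a : A, ∃ c : F, a + σ a = c • (1 : A))
    (hone : (1:A) ≠ 0) : σ 1 = 1 := by
  obtain ⟨c, hc⟩ := htrace 1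
  have hσ1v : σ (1:A) = (c-1)•(1:A) := by
    rw [sub_smul, one_smul, ← hc]; abel
  have hsq : σ (1:A) * σ 1 = σ 1 := by rw [← hanti 1 1, one_mul]
  have hd : (c-1)*(c-1) = c-1 := by
    have h2 : ((c-1)*(c-1))•(1:A) = (c-1)•(1:A) := by
      calc ((c-1)*(c-1))•(1:A) = σ (1:A) * σ 1 := by
            rw [hσ1v, smul_mul_assoc, mul_smul_comm, smul_smul, one_mul]
        _ = σ 1 := hsq
        _ = (c-1)•(1:A) := hσ1v
    have h3 : ((c-1)*(c-1) - (c-1))•(1:A) = 0 := by rw [sub_smul, h2, sub_self]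
    rcases smul_eq_zero.mp h3 with h|h
    · exact sub_eq_zero.mp h
    · exact absurd h hone
  have hcases : c - 1 = 0 ∨ c - 1 = 1 := by
    rcases mul_eq_zero.mp (show (c-1)*((c-1)-1) = 0 by linear_combination hd) with h|h
    · exact Or.inl h
    · exact Or.inr (by linear_combination h)
  rcases hcases with h|h
  · exfalso
    apply hone
    have h0 : σ (1:A) = 0 := by rw [hσ1v, h, zero_smul]
    calc (1:A) = σ (σ 1) := (hinvol 1).symm
      _ = σ 0 := by rw [h0]
      _ = 0 := map_zero σ
  · rw [hσ1v, h, one_smul]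

private lemma prodf (i j : A) (a e c : F)
    (hii : i*i = a•(1:A)) (hij : i*j = e•(1:A) + i) (hji : j*i = e•(1:A) - i)
    (hjj : j*j = c•(1:A)) (x1 x2 x3 y1 y2 y3 : F) :
    (x1•(1:A) + x2•i + x3•j) * (y1•(1:A) + y2•i + y3•j) =
      (x1*y1 + a*(x2*y2) + e*(x2*y3 + x3*y2) + c*(x3*y3))•(1:A)
      + (x1*y2 + x2*y1 + (x2*y3 - x3*y2))•i + (x1*y3 + x3*y1)•j := by
  simp only [add_mul, mul_add, smul_mul_assoc, mul_smul_comm, hii, hij, hji, hjj,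
    one_mul, mul_one, smul_add, smul_sub, smul_smul]
  match_scalars <;> ring

private lemma auxAssoc
    (hchar : (2 : F) ≠ 0)
    (σ : A →ₗ[F] A)
    (hanti : ∀ a b : A, σ (a * b) = σ b * σ a)
    (hnorm : ∀ a : A, ∃ c : F, a * σ a = c • (1 : A))
    (hvn : ∀ a b : A, a * b = 1 → b * a = 1)
    (u v : A) (hu : σ u = -u) (hv : σ v = -v)
    (hne : u*v ≠ v*u)
    (lam mu : F) (hmu : mu ≠ 0)
    (hrep : (2⁻¹ : F) • (u*v - v*u) = lam • u + mu • v) :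
    ∀ x ∈ Submodule.span F ({1, u, v} : Set A),
    ∀ y ∈ Submodule.span F ({1, u, v} : Set A),
    ∀ z ∈ Submodule.span F ({1, u, v} : Set A),
      (x*y)*z = x*(y*z) := by
  obtain ⟨i, hi⟩ : ∃ w : A, w = lam • u + mu • v := ⟨_, rfl⟩
  obtain ⟨j, hj⟩ : ∃ w : A, w = (-mu⁻¹) • u := ⟨_, rfl⟩
  have h2i : u*v - v*u = (2:F)•i := by
    have h := congrArg (fun w => (2:F)•w) hrep
    simp only [smul_smul, mul_inv_cancel₀ hchar, one_smul] at h
    rw [h, hi]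
  have huv : u*v = v*u + (2:F)•i := by linear_combination (norm := module) h2i
  have hine : i ≠ 0 := by
    intro h; rw [h, smul_zero] at h2i; exact hne (sub_eq_zero.mp h2i)
  have hσi : σ i = -i := by
    rw [hi, map_add, map_smul, map_smul, hu, hv]
    module
  have hσj : σ j = -j := by
    rw [hj, map_smul, hu]
    module
  have hsqskew : ∀ x : A, σ x = -x → ∃ n : F, x*x = n•(1:A) := by
    intro x hx
    obtain ⟨c, hc⟩ := hnorm x
    rw [hx, mul_neg] at hc
    exact ⟨-c, by rw [neg_smul, ← hc, neg_neg]⟩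
  obtain ⟨a0, hii⟩ := hsqskew i hσi
  obtain ⟨c0, hjj⟩ := hsqskew j hσj
  have hσij : σ (i+j) = -(i+j) := by rw [map_add, hσi, hσj, neg_add]
  obtain ⟨n3, h3⟩ := hsqskew (i+j) hσij
  have hsum : i*j + j*i = (n3 - a0 - c0)•(1:A) := by
    rw [add_mul, mul_add, mul_add, hii, hjj] at h3
    linear_combination (norm := module) h3
  have hIu : i*u - u*i = (-(2*mu))•i := by
    have step : i*u - u*i = (lam•u + mu•v)*u - u*(lam•u + mu•v) := by rw [hi]
    rw [step]
    simp only [add_mul, mul_add, smul_mul_assoc, mul_smul_comm]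
    rw [huv]
    match_scalars <;> ring
  have hdiff : i*j - j*i = (2:F)•i := by
    have hj' : i*j - j*i = (-mu⁻¹)•(i*u - u*i) := by
      rw [hj, mul_smul_comm, smul_mul_assoc, smul_sub]
    rw [hj', hIu, smul_smul]
    congr 1
    field_simp
  have hji0 : j*i = (n3 - a0 - c0)•(1:A) - i*j := by
    linear_combination (norm := module) hsum
  have h2ij : (2:F)•(i*j) = (n3-a0-c0)•(1:A) + (2:F)•i := by
    linear_combination (norm := module) hsum + hdiff
  have hij : i*j = (2⁻¹*(n3-a0-c0))•(1:A) + i := by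
    have h := congrArg (fun w => (2⁻¹:F)•w) h2ij
    simp only [smul_smul, smul_add, inv_mul_cancel₀ hchar, one_smul] at h
    rw [h]
  have hji : j*i = (2⁻¹*(n3-a0-c0))•(1:A) - i := by
    rw [hji0, hij]
    match_scalars <;> field_simp <;> ring
  set e0 : F := 2⁻¹*(n3-a0-c0) with he0
  -- step 1 : a0 = 0
  have hne2 : (-2:F) ≠ 0 := by simpa using hchar
  have ha0 : a0 = 0 := by
    by_contra hA
    have hXY : ((1:F)•(1:A) + (-(1+e0)/a0)•i + (1:F)•j) *
        ((0:F)•(1:A) + (-1:F)•i + (0:F)•j) = 1 := by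
      rw [prodf i j a0 e0 c0 hii hij hji hjj]
      conv_rhs => rw [(show (1:A) = (1:F)•(1:A) + (0:F)•i + (0:F)•j by simp)]
      match_scalars <;> field_simp <;> ring
    have hYX := hvn _ _ hXY
    have hYX2 : ((0:F)•(1:A) + (-1:F)•i + (0:F)•j) *
        ((1:F)•(1:A) + (-(1+e0)/a0)•i + (1:F)•j) = 1 + (-2:F)•i := by
      rw [prodf i j a0 e0 c0 hii hij hji hjj]
      conv_rhs => rw [(show (1:A) = (1:F)•(1:A) + (0:F)•i + (0:F)•j by simp)]
      match_scalars <;> field_simp <;> ring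
    rw [hYX] at hYX2
    have hi0 : (-2:F)•i = 0 := left_eq_add.mp hYX2
    rcases smul_eq_zero.mp hi0 with h|h
    · exact hne2 h
    · exact hine h
  rw [ha0] at hii
  have he0' : e0 = 0 := by
    by_contra hE
    have hXY : ((1:F)•(1:A) + (0:F)•i + (1:F)•j) *
        ((0:F)•(1:A) + (e0⁻¹:F)•i + (0:F)•j) = 1 := by
      rw [prodf i j 0 e0 c0 hii hij hji hjj]
      conv_rhs => rw [(show (1:A) = (1:F)•(1:A) + (0:F)•i + (0:F)•j by simp)]
      match_scalars <;> field_simp <;> ring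
    have hYX := hvn _ _ hXY
    have hYX2 : ((0:F)•(1:A) + (e0⁻¹:F)•i + (0:F)•j) *
        ((1:F)•(1:A) + (0:F)•i + (1:F)•j) = 1 + (2*e0⁻¹:F)•i := by
      rw [prodf i j 0 e0 c0 hii hij hji hjj]
      conv_rhs => rw [(show (1:A) = (1:F)•(1:A) + (0:F)•i + (0:F)•j by simp)]
      match_scalars <;> field_simp <;> ring
    rw [hYX] at hYX2
    have hi0 : (2*e0⁻¹:F)•i = 0 := left_eq_add.mp hYX2
    rcases smul_eq_zero.mp hi0 with h|h
    · exact (mul_ne_zero hchar (inv_ne_zero hE)) h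
    · exact hine h
  rw [he0'] at hij hji
  have hc0 : c0 = 1 := by
    by_contra hC
    have hC1 : c0 - 1 ≠ 0 := sub_ne_zero.mpr hC
    have hXY : ((1:F)•(1:A) + (1:F)•i + (1:F)•j) *
        ((-(c0-1)⁻¹:F)•(1:A) + (0:F)•i + ((c0-1)⁻¹:F)•j) = 1 := by
      rw [prodf i j 0 0 c0 hii hij hji hjj]
      conv_rhs => rw [(show (1:A) = (1:F)•(1:A) + (0:F)•i + (0:F)•j by simp)]
      match_scalars <;> field_simp <;> ring
    have hYX := hvn _ _ hXY
    have hYX2 : ((-(c0-1)⁻¹:F)•(1:A) + (0:F)•i + ((c0-1)⁻¹:F)•j) *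
        ((1:F)•(1:A) + (1:F)•i + (1:F)•j) = 1 + (-2*(c0-1)⁻¹:F)•i := by
      rw [prodf i j 0 0 c0 hii hij hji hjj]
      conv_rhs => rw [(show (1:A) = (1:F)•(1:A) + (0:F)•i + (0:F)•j by simp)]
      match_scalars <;> field_simp <;> ring
    rw [hYX] at hYX2
    have hi0 : (-2*(c0-1)⁻¹:F)•i = 0 := left_eq_add.mp hYX2
    rcases smul_eq_zero.mp hi0 with h|h
    · exact (mul_ne_zero hne2 (inv_ne_zero hC1)) h
    · exact hine h
  rw [hc0] at hjj
  -- span inclusion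
  have hsub : Submodule.span F ({1,u,v} : Set A) ≤ Submodule.span F ({1,i,j} : Set A) := by
    rw [Submodule.span_le]
    intro w hw
    simp only [Set.mem_insert_iff, Set.mem_singleton_iff] at hw
    rcases hw with h|h|h
    · rw [h]; exact Submodule.subset_span (by simp)
    · have hu_eq : u = (-mu)•j := by
        rw [hj, smul_smul, show (-mu)*(-mu⁻¹) = 1 by field_simp, one_smul]
      rw [h, hu_eq]
      exact Submodule.smul_mem _ _ (Submodule.subset_span (by simp))
    · have hv_eq : v = mu⁻¹•i + lam•j := by
        rw [hi, hj]
        match_scalars <;> field_simp <;> ring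
      rw [h, hv_eq]
      exact Submodule.add_mem _
        (Submodule.smul_mem _ _ (Submodule.subset_span (by simp)))
        (Submodule.smul_mem _ _ (Submodule.subset_span (by simp)))
  intro x hx y hy z hz
  obtain ⟨x1,x2,x3, rfl⟩ := memSpanTriple (hsub hx)
  obtain ⟨y1,y2,y3, rfl⟩ := memSpanTriple (hsub hy)
  obtain ⟨z1,z2,z3, rfl⟩ := memSpanTriple (hsub hz)
  simp only [prodf i j 0 0 1 hii hij hji hjj]
  match_scalars <;> ring

private theorem vnfForward
    (F : Type*) [Field F] (A : Type*) [NonAssocRing A] [Module F A]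
    [SMulCommClass F A A] [IsScalarTower F A A]
    (hchar : (2 : F) ≠ 0)
    (σ : A →ₗ[F] A)
    (hanti : ∀ a b : A, σ (a * b) = σ b * σ a)
    (hinvol : ∀ a : A, σ (σ a) = a)
    (htrace : ∀ a : A, ∃ c : F, a + σ a = c • (1 : A))
    (hnorm : ∀ a : A, ∃ c : F, a * σ a = c • (1 : A))
    (hσ1 : (1:A) ≠ 0 → σ 1 = 1)
    (auxAssoc : ∀ (u v : A), σ u = -u → σ v = -v → u*v ≠ v*u →
      ∀ (lam mu : F), mu ≠ 0 → (2⁻¹ : F) • (u*v - v*u) = lam • u + mu • v →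
      ∀ x ∈ Submodule.span F ({1, u, v} : Set A),
      ∀ y ∈ Submodule.span F ({1, u, v} : Set A),
      ∀ z ∈ Submodule.span F ({1, u, v} : Set A), (x*y)*z = x*(y*z))
    (hvn : ∀ a b : A, a * b = 1 → b * a = 1) :
      (∀ B : Submodule F A, (1 : A) ∈ B →
        (∀ x ∈ B, ∀ y ∈ B, x * y ∈ B) → Module.finrank F B = 3 →
        ((∀ x ∈ B, ∀ y ∈ B, x * y = y * x) ∨
          (∀ x ∈ B, ∀ y ∈ B, ∀ z ∈ B, (x * y) * z = x * (y * z)))) := by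
  intro B hB1 hBmul hBdim
  by_cases h10 : (1:A) = 0
  · left
    have h0 : ∀ w : A, w = 0 := fun w => by rw [← mul_one w, h10, mul_zero]
    intro x _ y _
    rw [h0 (x*y), h0 (y*x)]
  by_cases hcomm : ∀ x ∈ B, ∀ y ∈ B, x*y = y*x
  · left; exact hcomm
  right
  push_neg at hcomm
  obtain ⟨x, hxB, y, hyB, hxy⟩ := hcomm
  have hσ1' : σ 1 = 1 := hσ1 h10
  obtain ⟨s, hs⟩ := htrace x
  obtain ⟨t, ht⟩ := htrace y
  obtain ⟨u, hu_def⟩ : ∃ w : A, w = x - (2⁻¹*s)•(1:A) := ⟨_, rfl⟩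
  obtain ⟨v, hv_def⟩ : ∃ w : A, w = y - (2⁻¹*t)•(1:A) := ⟨_, rfl⟩
  have hσx : σ x = s•(1:A) - x := by rw [← hs]; abel
  have hσy : σ y = t•(1:A) - y := by rw [← ht]; abel
  have hσu : σ u = -u := by
    rw [hu_def, map_sub, map_smul, hσ1', hσx]
    match_scalars <;> field_simp <;> ring
  have hσv : σ v = -v := by
    rw [hv_def, map_sub, map_smul, hσ1', hσy]
    match_scalars <;> field_simp <;> ring
  have huB : u ∈ B := by rw [hu_def]; exact B.sub_mem hxB (B.smul_mem _ hB1)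
  have hvB : v ∈ B := by rw [hv_def]; exact B.sub_mem hyB (B.smul_mem _ hB1)
  have hcom : u*v - v*u = x*y - y*x := by
    rw [hu_def, hv_def]
    simp only [sub_mul, mul_sub, smul_mul_assoc, mul_smul_comm, smul_smul, one_mul, mul_one]
    match_scalars <;> ring
  have hcomne : u*v - v*u ≠ 0 := by
    intro h
    apply hxy
    have h2 : x*y - y*x = 0 := by rw [← hcom]; exact h
    exact sub_eq_zero.mp h2
  have hnecom : u*v ≠ v*u := fun h => hcomne (by rw [h, sub_self])
  obtain ⟨i, hidef⟩ : ∃ w : A, w = (2⁻¹:F)•(u*v - v*u) := ⟨_, rfl⟩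
  have hiB : i ∈ B := by
    rw [hidef]
    exact B.smul_mem _ (B.sub_mem (hBmul u huB v hvB) (hBmul v hvB u huB))
  have hine : i ≠ 0 := by
    intro h
    apply hcomne
    have h2 : (2⁻¹:F)•(u*v - v*u) = 0 := by rw [← hidef, h]
    rcases smul_eq_zero.mp h2 with h'|h'
    · exact absurd h' (inv_ne_zero hchar)
    · exact h'
  have hσi : σ i = -i := by
    rw [hidef, map_smul, map_sub, hanti, hanti, hσu, hσv]
    simp only [neg_mul_neg]
    module
  -- linear independence of 1, u, v
  have hli : LinearIndependent F ![(1:A), u, v] := by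
    rw [Fintype.linearIndependent_iff]
    intro g hg
    rw [Fin.sum_univ_three] at hg
    have hg' : g 0 • (1:A) + g 1 • u + g 2 • v = 0 := by simpa using hg
    have hgs := congrArg σ hg'
    rw [map_add, map_add, map_smul, map_smul, map_smul, hσ1', hσu, hσv, map_zero] at hgs
    have h0 : (g 0 * 2)•(1:A) = 0 := by linear_combination (norm := module) hg' + hgs
    have hg0 : g 0 = 0 := by
      rcases smul_eq_zero.mp h0 with h|h
      · rcases mul_eq_zero.mp h with h'|h'
        · exact h'
        · exact absurd h' hchar
      · exact absurd h h10
    rw [hg0, zero_smul, zero_add] at hg'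
    have hg1 : g 1 = 0 := by
      by_contra h1
      apply hcomne
      have hueq : u = (-(g 1)⁻¹ * g 2)•v := by
        have h2 : (g 1)•u = -((g 2)•v) := by linear_combination (norm := module) hg'
        have h3 := congrArg (fun w => (g 1)⁻¹ • w) h2
        simp only [smul_smul, smul_neg, inv_mul_cancel₀ h1, one_smul] at h3
        rw [h3]
        match_scalars <;> ring
      rw [hueq, smul_mul_assoc, mul_smul_comm, sub_self]
    rw [hg1, zero_smul, zero_add] at hg'
    have hg2 : g 2 = 0 := by
      by_contra h2
      apply hcomne
      have hveq : v = 0 := by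
        rcases smul_eq_zero.mp hg' with h|h
        · exact absurd h h2
        · exact h
      rw [hveq, mul_zero, zero_mul, sub_self]
    intro idx
    fin_cases idx <;> assumption
  -- span equals B
  have hle : Submodule.span F ({1,u,v} : Set A) ≤ B := by
    rw [Submodule.span_le]
    intro w hw
    simp only [Set.mem_insert_iff, Set.mem_singleton_iff] at hw
    rcases hw with h|h|h <;> rw [h] <;> assumption
  have hfd : FiniteDimensional F B := FiniteDimensional.of_finrank_eq_succ (n := 2) hBdim
  have hfr : Module.finrank F (Submodule.span F ({1,u,v}:Set A)) = 3 := by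
    have h := finrank_span_eq_card hli
    have hr : Set.range ![(1:A),u,v] = {1,u,v} := by
      ext w; simp [Matrix.range_cons, Matrix.range_empty]; tauto
    rw [hr] at h
    simpa using h
  have hspan : Submodule.span F ({1,u,v} : Set A) = B :=
    Submodule.eq_of_le_of_finrank_le hle (by rw [hBdim, hfr])
  -- coordinates of i
  have hiS : i ∈ Submodule.span F ({1,u,v}:Set A) := by rw [hspan]; exact hiB
  obtain ⟨cc, lam, mu, hirep⟩ := memSpanTriple hiS
  have hσi2 : σ i = cc•(1:A) - lam•u - mu•v := by
    rw [hirep, map_add, map_add, map_smul, map_smul, map_smul, hσ1', hσu, hσv]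
    module
  have hcc : cc = 0 := by
    have heq : cc•(1:A) - lam•u - mu•v = -(cc•(1:A) + lam•u + mu•v) := by
      rw [← hσi2, hσi, hirep]
    have h2 : (cc*2)•(1:A) = 0 := by linear_combination (norm := module) heq
    rcases smul_eq_zero.mp h2 with h|h
    · rcases mul_eq_zero.mp h with h'|h'
      · exact h'
      · exact absurd h' hchar
    · exact absurd h h10
  have hirep' : i = lam•u + mu•v := by rw [hirep, hcc, zero_smul, zero_add]
  have hlm : ¬(lam = 0 ∧ mu = 0) := by
    rintro ⟨h1, h2⟩
    exact hine (by rw [hirep', h1, h2, zero_smul, zero_smul, add_zero])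
  by_cases hmu : mu = 0
  · -- swap roles
    have hlam : lam ≠ 0 := fun h => hlm ⟨h, hmu⟩
    have hrep2 : (2⁻¹:F)•(v*u - u*v) = (-mu)•v + (-lam)•u := by
      have hneg : (2⁻¹:F)•(v*u - u*v) = -((2⁻¹:F)•(u*v - v*u)) := by module
      rw [hneg, ← hidef, hirep']
      module
    have key := auxAssoc v u hσv hσu (fun h => hnecom h.symm) (-mu) (-lam)
      (neg_ne_zero.mpr hlam) hrep2
    have hset : ({1, v, u} : Set A) = {1, u, v} := by rw [Set.pair_comm v u]
    rw [hset, hspan] at key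
    exact key
  · have key := auxAssoc u v hσu hσv hnecom lam mu hmu (by rw [← hidef]; exact hirep')
    rw [hspan] at key
    exact key

private theorem vnfReverse
    (F : Type*) [Field F] (A : Type*) [NonAssocRing A] [Module F A]
    [SMulCommClass F A A] [IsScalarTower F A A]
    (hchar : (2 : F) ≠ 0)
    (σ : A →ₗ[F] A)
    (hanti : ∀ a b : A, σ (a * b) = σ b * σ a)
    (hinvol : ∀ a : A, σ (σ a) = a)
    (htrace : ∀ a : A, ∃ c : F, a + σ a = c • (1 : A))
    (hnorm : ∀ a : A, ∃ c : F, a * σ a = c • (1 : A))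
    (hσ1 : (1:A) ≠ 0 → σ 1 = 1)
    (hB : ∀ B : Submodule F A, (1 : A) ∈ B →
        (∀ x ∈ B, ∀ y ∈ B, x * y ∈ B) → Module.finrank F B = 3 →
        ((∀ x ∈ B, ∀ y ∈ B, x * y = y * x) ∨
          (∀ x ∈ B, ∀ y ∈ B, ∀ z ∈ B, (x * y) * z = x * (y * z)))) :
    ∀ a b : A, a * b = 1 → b * a = 1 := by
  intro a b hab
  by_cases h10 : (1:A) = 0
  · rw [show a = (0:A) by rw [← mul_one a, h10, mul_zero], mul_zero]
    exact h10.symm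
  by_contra hba
  have hσ1' : σ 1 = 1 := hσ1 h10
  obtain ⟨s, hs⟩ := htrace a
  obtain ⟨n, hn⟩ := hnorm a
  obtain ⟨t, ht⟩ := htrace b
  obtain ⟨m, hm⟩ := hnorm b
  have hσa : σ a = s•(1:A) - a := by rw [← hs]; abel
  have hσb : σ b = t•(1:A) - b := by rw [← ht]; abel
  have haa : a*a = s•a - n•(1:A) := by
    have h := hn
    rw [hσa, mul_sub, mul_smul_comm, mul_one] at h
    linear_combination (norm := module) -h
  have hbb : b*b = t•b - m•(1:A) := by
    have h := hm
    rw [hσb, mul_sub, mul_smul_comm, mul_one] at h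
    linear_combination (norm := module) -h
  have hba_eq : b*a = (1:A) + t•a + s•b - (t*s)•(1:A) := by
    have h1 : σ b * σ a = 1 := by rw [← hanti, hab, hσ1']
    rw [hσa, hσb] at h1
    simp only [sub_mul, mul_sub, smul_mul_assoc, mul_smul_comm, smul_smul,
      one_mul, mul_one] at h1
    linear_combination (norm := module) h1
  set B : Submodule F A := Submodule.span F ({1, a, b} : Set A) with hBdef
  have h1B : (1:A) ∈ B := Submodule.subset_span (by simp)
  have haB : a ∈ B := Submodule.subset_span (by simp)
  have hbB : b ∈ B := Submodule.subset_span (by simp)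
  have hbaB : b*a ∈ B := by
    rw [hba_eq]
    exact B.sub_mem (B.add_mem (B.add_mem h1B (B.smul_mem _ haB)) (B.smul_mem _ hbB))
      (B.smul_mem _ h1B)
  have hgen : ∀ g ∈ ({1,a,b} : Set A), ∀ h ∈ ({1,a,b} : Set A), g*h ∈ B := by
    intro g hg h hh
    simp only [Set.mem_insert_iff, Set.mem_singleton_iff] at hg hh
    rcases hg with rfl|rfl|rfl <;> rcases hh with rfl|rfl|rfl
    · rw [one_mul]; exact h1B
    · rw [one_mul]; exact haB
    · rw [one_mul]; exact hbB
    · rw [mul_one]; exact haB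
    · rw [haa]; exact B.sub_mem (B.smul_mem _ haB) (B.smul_mem _ h1B)
    · rw [hab]; exact h1B
    · rw [mul_one]; exact hbB
    · exact hbaB
    · rw [hbb]; exact B.sub_mem (B.smul_mem _ hbB) (B.smul_mem _ h1B)
  have hmulB : ∀ x ∈ B, ∀ y ∈ B, x*y ∈ B := by
    intro x hx
    refine Submodule.span_induction (fun g hg => ?_) ?_ ?_ ?_ hx
    · intro y hy
      refine Submodule.span_induction (fun h hh => hgen g hg h hh) ?_ ?_ ?_ hy
      · rw [mul_zero]; exact B.zero_mem
      · intro w z _ _ hw hz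
        rw [mul_add]; exact B.add_mem hw hz
      · intro c w _ hw
        rw [mul_smul_comm]; exact B.smul_mem _ hw
    · intro y hy; rw [zero_mul]; exact B.zero_mem
    · intro w z _ _ hw hz y hy
      rw [add_mul]; exact B.add_mem (hw y hy) (hz y hy)
    · intro c w _ hw y hy
      rw [smul_mul_assoc]; exact B.smul_mem _ (hw y hy)
  have hswap : ∀ c d : F, b = c•(1:A) + d•a → False := by
    intro c d hb
    apply hba
    rw [← hab]
    conv_lhs => rw [hb]
    conv_rhs => rw [hb]
    simp [add_mul, mul_add, smul_mul_assoc, mul_smul_comm, one_mul, mul_one]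
  have haswap : ∀ c d : F, a = c•(1:A) + d•b → False := by
    intro c d ha
    apply hba
    rw [← hab]
    conv_lhs => rw [ha]
    conv_rhs => rw [ha]
    simp [add_mul, mul_add, smul_mul_assoc, mul_smul_comm, one_mul, mul_one]
  have hli : LinearIndependent F ![(1:A), a, b] := by
    rw [Fintype.linearIndependent_iff]
    intro g hg
    rw [Fin.sum_univ_three] at hg
    have hg' : g 0 • (1:A) + g 1 • a + g 2 • b = 0 := by simpa using hg
    have hg2 : g 2 = 0 := by
      by_contra h2
      refine hswap (-(g 2)⁻¹ * g 0) (-(g 2)⁻¹ * g 1) ?_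
      have hh : (g 2)•b = -((g 0)•(1:A)) - (g 1)•a := by
        linear_combination (norm := module) hg'
      have h3 := congrArg (fun w => (g 2)⁻¹ • w) hh
      simp only [smul_smul, smul_sub, smul_neg, inv_mul_cancel₀ h2, one_smul] at h3
      rw [h3]
      match_scalars <;> ring
    rw [hg2, zero_smul, add_zero] at hg'
    have hg1 : g 1 = 0 := by
      by_contra h1
      refine haswap (-(g 1)⁻¹ * g 0) 0 ?_
      have hh : (g 1)•a = -((g 0)•(1:A)) := by
        linear_combination (norm := module) hg'
      have h3 := congrArg (fun w => (g 1)⁻¹ • w) hh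
      simp only [smul_smul, smul_neg, inv_mul_cancel₀ h1, one_smul] at h3
      rw [h3]
      match_scalars <;> ring
    rw [hg1, zero_smul, add_zero] at hg'
    have hg0 : g 0 = 0 := by
      rcases smul_eq_zero.mp hg' with h|h
      · exact h
      · exact absurd h h10
    intro idx
    fin_cases idx <;> assumption
  have hdimB : Module.finrank F B = 3 := by
    rw [hBdef]
    have h := finrank_span_eq_card hli
    have hr : Set.range ![(1:A),a,b] = {1,a,b} := by
      ext w; simp [Matrix.range_cons, Matrix.range_empty]; tauto
    rw [hr] at h
    simpa using h
  rcases hB B h1B hmulB hdimB with hcm | has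
  · apply hba
    rw [← hcm a haB b hbB]
    exact hab
  · have h3 := has a haB a haB b hbB
    rw [hab, mul_one, haa] at h3
    have harep : a = s•(1:A) - n•b := by
      rw [← h3]
      simp [sub_mul, smul_mul_assoc, one_mul, hab]
    apply hba
    rw [← hab]
    have hcomm2 : b*a = a*b := by
      conv_lhs => rw [harep]
      conv_rhs => rw [harep]
      simp [mul_sub, sub_mul, mul_smul_comm, smul_mul_assoc, mul_one, one_mul]
    exact hcomm2

end VNFHelpers

/-- An involutive algebra over a field of characteristic ≠ 2 is von-Neumann finite
if and only if every 3-dimensional subalgebra is commutative or associative. -/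
theorem involutive_vonNeumannFinite_iff_three_dim_subalgebras_comm_or_assoc
    (F : Type*) [Field F] (A : Type*) [NonAssocRing A] [Module F A]
    [SMulCommClass F A A] [IsScalarTower F A A]
    (hchar : (2 : F) ≠ 0)
    (σ : A →ₗ[F] A)
    (hanti : ∀ a b : A, σ (a * b) = σ b * σ a)
    (hinvol : ∀ a : A, σ (σ a) = a)
    (htrace : ∀ a : A, ∃ c : F, a + σ a = c • (1 : A))
    (hnorm : ∀ a : A, ∃ c : F, a * σ a = c • (1 : A)) :
    (∀ a b : A, a * b = 1 → b * a = 1) ↔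
      (∀ B : Submodule F A, (1 : A) ∈ B →
        (∀ x ∈ B, ∀ y ∈ B, x * y ∈ B) → Module.finrank F B = 3 →
        ((∀ x ∈ B, ∀ y ∈ B, x * y = y * x) ∨
          (∀ x ∈ B, ∀ y ∈ B, ∀ z ∈ B, (x * y) * z = x * (y * z)))) := by
  constructor
  · intro hvn
    exact vnfForward F A hchar σ hanti hinvol htrace hnorm
      (fun h10 => sigmaOne σ hanti hinvol htrace h10)
      (fun u v hu hv hne lam mu hmu hrep =>
        auxAssoc hchar σ hanti hnorm hvn u v hu hv hne lam mu hmu hrep)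
      hvn
  · intro hB
    exact vnfReverse F A hchar σ hanti hinvol htrace hnorm
      (fun h10 => sigmaOne σ hanti hinvol htrace h10) hB
end

section
/- Let F be a field of characteristic different from 2. Every 3-dimensional non-commutative associative involutive F-algebra is isomorphic as an F-algebra to the algebra U of upper triangular 2×2 matrices over F. -/
open Matrix

theorem key_lemma (F : Type*) [Field F] (A : Type*) [NonAssocRing A] [Module F A]
    [SMulCommClass F A A] [IsScalarTower F A A]
    (hdim : Module.finrank F A = 3)
    (e n : A) (hn : n ≠ 0) (hee : e*e = e) (hen : e*n = 0) (hne : n*e = n) (hnn : n*n = 0) :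
    ∃ f : A →ₗ[F] Matrix (Fin 2) (Fin 2) F,
      Function.Injective f ∧
      Set.range f = {M : Matrix (Fin 2) (Fin 2) F | M 1 0 = 0} ∧
      f 1 = 1 ∧
      ∀ a b : A, f (a * b) = f a * f b := by
  have he0 : e ≠ 0 := by rintro rfl; rw [mul_zero] at hne; exact hn hne.symm
  have hli : LinearIndependent F ![(1:A), e, n] := by
    rw [Fintype.linearIndependent_iff]
    intro g hg
    rw [Fin.sum_univ_three] at hg
    simp only [Matrix.cons_val_zero, Matrix.cons_val_one, Matrix.head_cons,
      Matrix.cons_val_two, Matrix.tail_cons] at hg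
    have h0 : g 0 = 0 := by
      have h := congrArg (· * n) hg
      simp only [add_mul, smul_mul_assoc, hen, hnn, one_mul, zero_mul, smul_zero,
        add_zero] at h
      exact (smul_eq_zero.mp h).resolve_right hn
    rw [h0, zero_smul, zero_add] at hg
    have h1 : g 1 = 0 := by
      have h := congrArg (e * ·) hg
      simp only [mul_add, mul_smul_comm, hee, hen, mul_zero, smul_zero, add_zero] at h
      exact (smul_eq_zero.mp h).resolve_right he0
    rw [h1, zero_smul, zero_add] at hg
    have h2 : g 2 = 0 := (smul_eq_zero.mp hg).resolve_right hn
    intro i; fin_cases i <;> assumption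
  have hcard : Fintype.card (Fin 3) = Module.finrank F A := by simp [hdim]
  let B : Module.Basis (Fin 3) F A := basisOfLinearIndependentOfCardEqFinrank hli hcard
  have hB : ∀ i, B i = ![(1:A), e, n] i := by
    intro i; simp [B, coe_basisOfLinearIndependentOfCardEqFinrank]
  have hB0 : B 0 = 1 := hB 0
  have hB1 : B 1 = e := hB 1
  have hB2 : B 2 = n := hB 2
  set E11 : Matrix (Fin 2) (Fin 2) F := Matrix.single 1 1 1 with hE11
  set E01 : Matrix (Fin 2) (Fin 2) F := Matrix.single 0 1 1 with hE01
  set m : Fin 3 → Matrix (Fin 2) (Fin 2) F := ![1, E11, E01] with hm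
  let f : A →ₗ[F] Matrix (Fin 2) (Fin 2) F := B.constr F m
  have hf : ∀ i, f (B i) = m i := fun i => B.constr_basis F m i
  have hf1 : f 1 = 1 := by rw [← hB0, hf]; rfl
  have hfe : f e = E11 := by rw [← hB1, hf]; rfl
  have hfn : f n = E01 := by rw [← hB2, hf]; rfl
  have hM1 : E11 * E11 = E11 := by
    rw [hE11, Matrix.single_mul_single_same, mul_one]
  have hM2 : E11 * E01 = 0 := Matrix.single_mul_single_of_ne (c := (1:F)) (1 : Fin 2) (1 : Fin 2) (0 : Fin 2) one_ne_zero 1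
  have hM3 : E01 * E11 = E01 := by
    rw [hE01, hE11, Matrix.single_mul_single_same, mul_one]
  have hM4 : E01 * E01 = 0 := Matrix.single_mul_single_of_ne (c := (1:F)) (0 : Fin 2) (1 : Fin 2) (0 : Fin 2) one_ne_zero 1
  -- multiplicativity
  have hmul : ∀ a b : A, f (a * b) = f a * f b := by
    have h : (LinearMap.mul F A).compr₂ f =
        (LinearMap.mul F (Matrix (Fin 2) (Fin 2) F)).compl₁₂ f f := by
      apply B.ext; intro i
      apply B.ext; intro j
      simp only [LinearMap.compr₂_apply, LinearMap.compl₁₂_apply, LinearMap.mul_apply']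
      rw [hB i, hB j]
      fin_cases i <;> fin_cases j <;>
        simp [one_mul, mul_one, hee, hen, hne, hnn,
          hf1, hfe, hfn, map_zero, hM1, hM2, hM3, hM4]
    intro a b
    have := LinearMap.congr_fun (LinearMap.congr_fun h a) b
    simpa using this
  -- expansion of f
  have hexp : ∀ x : A, f x = (B.repr x 0) • 1 + (B.repr x 1) • E11
      + (B.repr x 2) • E01 := by
    intro x
    conv_lhs => rw [← B.sum_repr x]
    rw [map_sum, Fin.sum_univ_three]
    simp only [LinearMap.map_smul, hB0, hB1, hB2, hf1, hfe, hfn]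
  have hent : ∀ (a b c : F) (i j : Fin 2), (a • (1 : Matrix (Fin 2) (Fin 2) F)
      + b • E11 + c • E01) i j = ![![a, c], ![0, a + b]] i j := by
    intro a b c i j
    fin_cases i <;> fin_cases j <;>
      simp [hE11, hE01, Matrix.one_apply, Matrix.single]
  have hinj : Function.Injective f := by
    rw [injective_iff_map_eq_zero]
    intro x hx
    have h := hexp x
    rw [hx] at h
    have h00 := congrFun (congrFun h.symm 0) 0
    have h11 := congrFun (congrFun h.symm 1) 1
    have h01 := congrFun (congrFun h.symm 0) 1
    rw [hent] at h00 h11 h01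
    simp only [Matrix.cons_val_zero, Matrix.cons_val_one, Matrix.head_cons,
      Matrix.zero_apply, Matrix.head_fin_const] at h00 h11 h01
    have hr : ∀ i, B.repr x i = 0 := by
      intro i; fin_cases i
      · exact h00
      · have := h11; rw [h00, zero_add] at this; exact this
      · exact h01
    have hrr : B.repr x = 0 := by ext i; exact hr i
    have := congrArg B.repr.symm hrr
    simpa using this
  refine ⟨f, hinj, ?_, hf1, hmul⟩
  ext M
  simp only [Set.mem_range, Set.mem_setOf_eq]
  constructor
  · rintro ⟨x, rfl⟩
    rw [hexp x]
    rw [hent]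
    simp
  · intro hM
    refine ⟨(M 0 0) • 1 + (M 1 1 - M 0 0) • e + (M 0 1) • n, ?_⟩
    rw [map_add, map_add, LinearMap.map_smul, LinearMap.map_smul, LinearMap.map_smul,
      hf1, hfe, hfn]
    ext i j
    rw [hent]
    fin_cases i <;> fin_cases j <;> simp [hM] <;> ring

/-- Over a field of characteristic ≠ 2, every 3-dimensional non-commutative associative
involutive algebra is isomorphic, as an algebra, to the algebra of upper triangular
2×2 matrices. -/
theorem three_dim_noncomm_assoc_involutive_iso_upperTriangular
    (F : Type*) [Field F] (A : Type*) [NonAssocRing A] [Module F A]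
    [SMulCommClass F A A] [IsScalarTower F A A]
    (hchar : (2 : F) ≠ 0)
    (hassoc : ∀ a b c : A, (a * b) * c = a * (b * c))
    (σ : A →ₗ[F] A)
    (hanti : ∀ a b : A, σ (a * b) = σ b * σ a)
    (hinvol : ∀ a : A, σ (σ a) = a)
    (htrace : ∀ a : A, ∃ c : F, a + σ a = c • (1 : A))
    (hnorm : ∀ a : A, ∃ c : F, a * σ a = c • (1 : A))
    (hdim : Module.finrank F A = 3)
    (hnoncomm : ¬ ∀ a b : A, a * b = b * a) :
    ∃ f : A →ₗ[F] Matrix (Fin 2) (Fin 2) F,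
      Function.Injective f ∧
      Set.range f = {M : Matrix (Fin 2) (Fin 2) F | M 1 0 = 0} ∧
      f 1 = 1 ∧
      ∀ a b : A, f (a * b) = f a * f b := by
  -- A is nontrivial
  have hone : (1:A) ≠ 0 := by
    intro h
    have hsub : Subsingleton A := ⟨fun x y => by
      calc x = x * 1 := (mul_one x).symm
      _ = 0 := by rw [h, mul_zero]
      _ = y * 1 := by rw [h, mul_zero]
      _ = y := mul_one y⟩
    rw [Module.finrank_zero_of_subsingleton] at hdim
    exact absurd hdim (by norm_num)
  have hsmul1 : ∀ c : F, c • (1:A) = 0 → c = 0 := by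
    intro c hc
    by_contra h
    apply hone
    calc (1:A) = c⁻¹ • (c • (1:A)) := by rw [smul_smul, inv_mul_cancel₀ h, one_smul]
    _ = 0 := by rw [hc, smul_zero]
  -- σ 1 = 1
  have hσ11 : σ 1 = 1 := by
    obtain ⟨c, hc⟩ := htrace 1
    have hσ1' : σ (1:A) = c • (1:A) - 1 := by rw [← hc]; abel
    have hidem : σ (1:A) = σ 1 * σ 1 := by
      conv_lhs => rw [show (1:A) = 1*1 by rw [one_mul], hanti]
    have hexp : (c • (1:A) - 1) * (c • (1:A) - 1) = (c*c) • (1:A) - c • (1:A) - c • (1:A) + 1 := by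
      simp only [sub_mul, mul_sub, smul_mul_assoc, mul_smul_comm, one_mul, mul_one]
      module
    rw [hσ1', hexp] at hidem
    have h0 : (c*c - 3*c + 2) • (1:A) =
        ((c*c) • (1:A) - c • (1:A) - c • (1:A) + 1) - (c • (1:A) - 1) := by module
    rw [← hidem, sub_self] at h0
    have hc2 : (c - 1)*(c - 2) = 0 := by
      have := hsmul1 _ h0; linear_combination this
    rcases mul_eq_zero.mp hc2 with h1 | h2
    · exfalso
      have hc1 : c = 1 := by linear_combination h1
      rw [hc1, one_smul, sub_self] at hσ1'
      have := hinvol 1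
      rw [hσ1', map_zero] at this
      exact hone this.symm
    · have hc2' : c = 2 := by linear_combination h2
      rw [hσ1', hc2', two_smul]; abel
  -- noncommuting pair
  push_neg at hnoncomm
  obtain ⟨a, b, hab⟩ := hnoncomm
  obtain ⟨ta, hta⟩ := htrace a
  obtain ⟨tb, htb⟩ := htrace b
  set u : A := a - (2⁻¹ * ta) • 1 with hu
  set v : A := b - (2⁻¹ * tb) • 1 with hv
  have hσu : σ u = -u := by
    have h1 : σ u = σ a - (2⁻¹*ta) • 1 := by rw [hu, map_sub, LinearMap.map_smul, hσ11]
    have ha' : σ a = ta • (1:A) - a := by rw [← hta]; abel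
    rw [h1, ha', hu]
    match_scalars <;> field_simp <;> ring
  have hσv : σ v = -v := by
    have h1 : σ v = σ b - (2⁻¹*tb) • 1 := by rw [hv, map_sub, LinearMap.map_smul, hσ11]
    have hb' : σ b = tb • (1:A) - b := by rw [← htb]; abel
    rw [h1, hb', hv]
    match_scalars <;> field_simp <;> ring
  obtain ⟨p', hp'⟩ := hnorm u
  rw [hσu, mul_neg] at hp'
  have hp : u*u = (-p') • (1:A) := by rw [neg_smul, ← hp', neg_neg]
  obtain ⟨q', hq'⟩ := hnorm v
  rw [hσv, mul_neg] at hq'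
  have hq : v*v = (-q') • (1:A) := by rw [neg_smul, ← hq', neg_neg]
  set p : F := -p'
  set q : F := -q'
  -- commutator
  have hcomm : u*v - v*u = a*b - b*a := by
    have h1 : u*v = a*b - (2⁻¹*tb)•a - (2⁻¹*ta)•b + ((2⁻¹*ta)*(2⁻¹*tb))•(1:A) := by
      rw [hu, hv]
      simp only [sub_mul, mul_sub, smul_mul_assoc, mul_smul_comm, one_mul, mul_one]
      module
    have h2 : v*u = b*a - (2⁻¹*ta)•b - (2⁻¹*tb)•a + ((2⁻¹*ta)*(2⁻¹*tb))•(1:A) := by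
      rw [hu, hv]
      simp only [sub_mul, mul_sub, smul_mul_assoc, mul_smul_comm, one_mul, mul_one]
      module
    rw [h1, h2]; abel
  have huvvu : u*v - v*u ≠ 0 := by rw [hcomm]; exact sub_ne_zero.mpr hab
  have huvne : u*v ≠ v*u := fun h => huvvu (sub_eq_zero.mpr h)
  -- linear independence of 1, u, v
  have hli : LinearIndependent F ![(1:A), u, v] := by
    rw [Fintype.linearIndependent_iff]
    intro g hg
    rw [Fin.sum_univ_three] at hg
    simp only [Matrix.cons_val_zero, Matrix.cons_val_one, Matrix.head_cons,
      Matrix.cons_val_two, Matrix.tail_cons] at hg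
    have h2 : g 2 = 0 := by
      have h := congrArg (fun x => u*x - x*u) hg
      simp only [mul_add, add_mul, mul_smul_comm, smul_mul_assoc, mul_one, one_mul,
        mul_zero, zero_mul, sub_zero] at h
      have h' : g 2 • (u*v - v*u) = 0 := by
        rw [smul_sub, ← h]; abel
      exact (smul_eq_zero.mp h').resolve_right huvvu
    have h1 : g 1 = 0 := by
      have h := congrArg (fun x => v*x - x*v) hg
      simp only [mul_add, add_mul, mul_smul_comm, smul_mul_assoc, mul_one, one_mul,
        mul_zero, zero_mul, sub_zero] at h
      have h' : g 1 • (v*u - u*v) = 0 := by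
        rw [smul_sub, ← h]; abel
      have : v*u - u*v ≠ 0 := fun hz => huvvu (by rw [← neg_sub, hz, neg_zero])
      exact (smul_eq_zero.mp h').resolve_right this
    rw [h1, h2, zero_smul, zero_smul, add_zero, add_zero] at hg
    have h0 : g 0 = 0 := hsmul1 _ hg
    intro i; fin_cases i <;> assumption
  have hcard : Fintype.card (Fin 3) = Module.finrank F A := by simp [hdim]
  let B3 : Module.Basis (Fin 3) F A := basisOfLinearIndependentOfCardEqFinrank hli hcard
  have hB3 : ∀ i, B3 i = ![(1:A), u, v] i := by
    intro i; simp [B3, coe_basisOfLinearIndependentOfCardEqFinrank]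
  obtain ⟨α, β, γ, huv⟩ : ∃ α β γ : F, u*v = α•(1:A) + β•u + γ•v := by
    refine ⟨B3.repr (u*v) 0, B3.repr (u*v) 1, B3.repr (u*v) 2, ?_⟩
    conv_lhs => rw [← B3.sum_repr (u*v)]
    rw [Fin.sum_univ_three, hB3 0, hB3 1, hB3 2]
    simp
  have hco : ∀ x y z : F, x•(1:A) + y•u + z•v = 0 → x = 0 ∧ y = 0 ∧ z = 0 := by
    intro x y z h
    have := Fintype.linearIndependent_iff.mp hli ![x,y,z] (by
      rw [Fin.sum_univ_three]
      simpa using h)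
    exact ⟨this 0, this 1, this 2⟩
  have hvu : v*u = α•(1:A) - β•u - γ•v := by
    have h1 : σ (u*v) = v*u := by rw [hanti, hσu, hσv, neg_mul_neg]
    rw [huv] at h1
    rw [← h1, map_add, map_add, LinearMap.map_smul, LinearMap.map_smul, LinearMap.map_smul, hσ11, hσu, hσv]
    module
  -- associativity equations
  have hA1 := hassoc u u v
  have hL1 : (u*u)*v = p•v := by rw [hp, smul_mul_assoc, one_mul]
  have hR1 : u*(u*v) = (β*p + γ*α)•(1:A) + (α + γ*β)•u + (γ*γ)•v := by
    rw [huv, mul_add, mul_add, mul_smul_comm, mul_smul_comm, mul_smul_comm, mul_one,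
      hp, huv]
    module
  have h01 : (β*p + γ*α)•(1:A) + (α + γ*β)•u + (γ*γ - p)•v = 0 := by
    have h := (hL1.symm.trans hA1).trans hR1
    have h0 : (β*p + γ*α)•(1:A) + (α + γ*β)•u + (γ*γ - p)•v =
        ((β*p + γ*α)•(1:A) + (α + γ*β)•u + (γ*γ)•v) - p•v := by module
    rw [h0, ← h, sub_self]
  obtain ⟨E1, E2, E3⟩ := hco _ _ _ h01
  have hA2 := hassoc u v v
  have hL2 : u*(v*v) = q•u := by rw [hq, mul_smul_comm, mul_one]
  have hR2 : (u*v)*v = (β*α + γ*q)•(1:A) + (β*β)•u + (α + β*γ)•v := by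
    rw [huv, add_mul, add_mul, smul_mul_assoc, smul_mul_assoc, smul_mul_assoc, one_mul,
      hq, huv]
    module
  have h02 : (β*α + γ*q)•(1:A) + (β*β - q)•u + (α + β*γ)•v = 0 := by
    have h := (hR2.symm.trans hA2).trans hL2
    have h0 : (β*α + γ*q)•(1:A) + (β*β - q)•u + (α + β*γ)•v =
        ((β*α + γ*q)•(1:A) + (β*β)•u + (α + β*γ)•v) - q•u := by module
    rw [h0, ← h, sub_self]
  obtain ⟨G1, G2, G3⟩ := hco _ _ _ h02
  -- the nilpotent element
  set n : A := β•u + γ•v with hndef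
  have hn : n ≠ 0 := by
    intro hn0
    apply huvne
    have hd : u*v - v*u = (2:F)•(β•u+γ•v) := by rw [huv, hvu]; module
    rw [← hndef, hn0, smul_zero] at hd
    exact sub_eq_zero.mp hd
  rcases eq_or_ne γ 0 with hγ | hγ
  · -- γ = 0, so β ≠ 0
    subst hγ
    have hβ : β ≠ 0 := by
      intro h
      apply hn
      rw [hndef, h, zero_smul, zero_smul, add_zero]
    have hα : α = 0 := by linear_combination E2
    have hpz : p = 0 := by linear_combination -E3
    have hqz : q = β*β := by linear_combination -G2
    have hp2 : u*u = 0 := by rw [hp, hpz, zero_smul]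
    have hq2 : v*v = (β*β)•(1:A) := by rw [hq, hqz]
    have huv2 : u*v = β•u := by rw [huv, hα]; simp
    have hvu2 : v*u = (-β)•u := by rw [hvu, hα]; simp
    set e : A := (2*β)⁻¹ • (β•(1:A) + v) with hedef
    have h2β : (2*β) ≠ 0 := mul_ne_zero hchar hβ
    have hee : e*e = e := by
      rw [hedef]
      simp only [smul_mul_assoc, mul_smul_comm, add_mul, mul_add, one_mul, mul_one,
        hp2, hq2, huv2, hvu2]
      match_scalars <;> field_simp [hβ] <;> ring
    have hen : e*n = 0 := by
      rw [hedef, hndef]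
      simp only [smul_mul_assoc, mul_smul_comm, add_mul, mul_add, one_mul, mul_one,
        hp2, hq2, huv2, hvu2, mul_zero, zero_mul, smul_zero, zero_smul]
      match_scalars <;> field_simp [hβ] <;> ring
    have hne2 : n*e = n := by
      rw [hedef, hndef]
      simp only [smul_mul_assoc, mul_smul_comm, add_mul, mul_add, one_mul, mul_one,
        hp2, hq2, huv2, hvu2, mul_zero, zero_mul, smul_zero, zero_smul]
      match_scalars <;> field_simp [hβ] <;> ring
    have hnn : n*n = 0 := by
      rw [hndef]
      simp only [smul_mul_assoc, mul_smul_comm, add_mul, mul_add, one_mul, mul_one,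
        hp2, hq2, huv2, hvu2, mul_zero, zero_mul, smul_zero, zero_smul]
      match_scalars <;> field_simp [hβ] <;> ring
    exact key_lemma F A hdim e n hn hee hen hne2 hnn
  · -- γ ≠ 0
    have hpγ : p = γ*γ := by linear_combination -E3
    have hα : α = -(γ*β) := by linear_combination E2
    have hqβ : q = β*β := by linear_combination -G2
    have hp2 : u*u = (γ*γ)•(1:A) := by rw [hp, hpγ]
    have hq2 : v*v = (β*β)•(1:A) := by rw [hq, hqβ]
    have huv2 : u*v = (-(γ*β))•(1:A) + β•u + γ•v := by rw [huv, hα]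
    have hvu2 : v*u = (-(γ*β))•(1:A) - β•u - γ•v := by rw [hvu, hα]
    set e : A := (2*γ)⁻¹ • (γ•(1:A) - u) with hedef
    have h2γ : (2*γ) ≠ 0 := mul_ne_zero hchar hγ
    have hee : e*e = e := by
      rw [hedef]
      simp only [smul_mul_assoc, mul_smul_comm, sub_mul, mul_sub, add_mul, mul_add,
        one_mul, mul_one, hp2, hq2, huv2, hvu2]
      match_scalars <;> field_simp [hγ] <;> ring
    have hen : e*n = 0 := by
      rw [hedef, hndef]
      simp only [smul_mul_assoc, mul_smul_comm, sub_mul, mul_sub, add_mul, mul_add,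
        one_mul, mul_one, hp2, hq2, huv2, hvu2]
      match_scalars <;> field_simp [hγ] <;> ring
    have hne2 : n*e = n := by
      rw [hedef, hndef]
      simp only [smul_mul_assoc, mul_smul_comm, sub_mul, mul_sub, add_mul, mul_add,
        one_mul, mul_one, hp2, hq2, huv2, hvu2]
      match_scalars <;> field_simp [hγ] <;> ring
    have hnn : n*n = 0 := by
      rw [hndef]
      simp only [smul_mul_assoc, mul_smul_comm, sub_mul, mul_sub, add_mul, mul_add,
        one_mul, mul_one, hp2, hq2, huv2, hvu2]
      match_scalars <;> field_simp [hγ] <;> ring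
    exact key_lemma F A hdim e n hn hee hen hne2 hnn
end

section
/- Let F be a field of characteristic different from 2 and let A be an involutive F-algebra. Then A is reversible if and only if every 3-dimensional subalgebra of A is commutative. -/
section Aux

variable {F : Type*} [Field F] {A : Type*} [NonAssocRing A] [Module F A]
  [SMulCommClass F A A] [IsScalarTower F A A]

private lemma aux_sigma_one (σ : A →ₗ[F] A) (hanti : ∀ a b : A, σ (a*b) = σ b * σ a)
    (hinvol : ∀ a : A, σ (σ a) = a) (hnorm : ∀ a : A, ∃ c : F, a * σ a = c • (1:A)) :
    σ (1 : A) = 1 := by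
  obtain ⟨d, hd⟩ := hnorm 1
  rw [one_mul] at hd
  have h1 : σ (1:A) = (d*d) • 1 := by
    have h := hanti 1 1
    rw [mul_one] at h
    rw [h, hd, smul_mul_assoc, mul_smul_comm, one_mul, smul_smul]
  have h2 : (d*d) • (1:A) = 1 := by
    have h := hinvol 1
    rw [hd, map_smul, hd, smul_smul] at h
    exact h
  rw [h1, h2]

private lemma aux_dep_comm (u w : A) (s t : F) (hw : w = s•(1:A) + t•u) : u * w = w * u := by
  subst hw
  simp [mul_add, add_mul, mul_smul_comm, smul_mul_assoc]

private lemma aux_notindep_comm (u v : A) (h : ¬ LinearIndependent F ![1,u,v]) :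
    u*v = v*u := by
  rw [Fintype.not_linearIndependent_iff] at h
  obtain ⟨g, hsum, i, hi⟩ := h
  rw [Fin.sum_univ_three] at hsum
  simp only [Matrix.cons_val_zero, Matrix.cons_val_one, Matrix.head_cons,
    Matrix.cons_val_two, Matrix.tail_cons] at hsum
  by_cases h1 : g 1 = 0
  · by_cases h2 : g 2 = 0
    · have h0 : g 0 ≠ 0 := by
        fin_cases i <;> simp_all
      have h10 : (1:A) = 0 := by
        have : g 0 • (1:A) = 0 := by
          rw [h1, h2] at hsum; simpa using hsum
        simpa [h0] using (smul_eq_zero.mp this)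
      have hz : ∀ z : A, z = 0 := fun z => by rw [← mul_one z, h10, mul_zero]
      rw [hz (u*v), hz (v*u)]
    · have hv : v = (-(g 0)/g 2)•(1:A) + (-(g 1)/g 2)•u := by
        have h3 : g 2 • v = (-(g 0))•(1:A) + (-(g 1))•u := by
          linear_combination (norm := module) hsum
        have h4 : (g 2)⁻¹ • (g 2 • v) = (g 2)⁻¹ • ((-(g 0))•(1:A) + (-(g 1))•u) := by rw [h3]
        rw [inv_smul_smul₀ h2] at h4
        rw [h4]
        match_scalars <;> field_simp
      exact aux_dep_comm u v _ _ hv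
  · have hu : u = (-(g 0)/g 1)•(1:A) + (-(g 2)/g 1)•v := by
      have h3 : g 1 • u = (-(g 0))•(1:A) + (-(g 2))•v := by
        linear_combination (norm := module) hsum
      have h4 : (g 1)⁻¹ • (g 1 • u) = (g 1)⁻¹ • ((-(g 0))•(1:A) + (-(g 2))•v) := by rw [h3]
      rw [inv_smul_smul₀ h1] at h4
      rw [h4]
      match_scalars <;> field_simp
    exact (aux_dep_comm v u _ _ hu).symm

private lemma aux_exp3 (x1 x2 x3 y1 y2 y3 a b α β γ : F) (u v : A)
    (hu : u*u = a•(1:A)) (hv : v*v = b•(1:A)) (huv : u*v = α•(1:A) + β•u + γ•v)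
    (hvu : v*u = α•(1:A) - β•u - γ•v) :
    (x1•(1:A) + x2•u + x3•v) * (y1•(1:A) + y2•u + y3•v)
      = (x1*y1 + a*(x2*y2) + b*(x3*y3) + α*(x2*y3+x3*y2))•(1:A)
        + (x1*y2 + x2*y1 + β*(x2*y3 - x3*y2))•u
        + (x1*y3 + x3*y1 + γ*(x2*y3 - x3*y2))•v := by
  simp only [mul_add, add_mul, smul_mul_assoc, mul_smul_comm, one_mul, mul_one, hu, hv, huv, hvu,
    smul_add, smul_sub, smul_smul]
  module

private lemma aux_mp (F : Type*) [Field F] (A : Type*) [NonAssocRing A] [Module F A]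
    [SMulCommClass F A A] [IsScalarTower F A A]
    (hchar : (2 : F) ≠ 0)
    (σ : A →ₗ[F] A)
    (hanti : ∀ a b : A, σ (a * b) = σ b * σ a)
    (htrace : ∀ a : A, ∃ c : F, a + σ a = c • (1 : A))
    (hnorm : ∀ a : A, ∃ c : F, a * σ a = c • (1 : A))
    (hσ1 : σ (1:A) = 1)
    (hrev : ∀ a b : A, a * b = 0 → b * a = 0)
    (B : Submodule F A) (hB1 : (1:A) ∈ B)
    (hBmul : ∀ x ∈ B, ∀ y ∈ B, x * y ∈ B) (hBdim : Module.finrank F B = 3)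
    (x : A) (hx : x ∈ B) (y : A) (hy : y ∈ B) : x * y = y * x := by
  obtain ⟨tx, htx⟩ := htrace x
  obtain ⟨ty, hty⟩ := htrace y
  set u : A := x - (tx/2)•(1:A) with hu_def
  set v : A := y - (ty/2)•(1:A) with hv_def
  have hred : x*y - y*x = u*v - v*u := by
    rw [hu_def, hv_def]
    simp only [sub_mul, mul_sub, smul_mul_assoc, mul_smul_comm, one_mul, mul_one, smul_smul,
      smul_sub, smul_add]
    module
  have hσu : σ u = -u := by
    rw [hu_def, map_sub, map_smul, hσ1]
    have hσx : σ x = tx•(1:A) - x := by rw [← htx]; abel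
    rw [hσx]
    match_scalars <;> field_simp <;> ring
  have hσv : σ v = -v := by
    rw [hv_def, map_sub, map_smul, hσ1]
    have hσy : σ y = ty•(1:A) - y := by rw [← hty]; abel
    rw [hσy]
    match_scalars <;> field_simp <;> ring
  rw [← sub_eq_zero, hred]
  by_cases hind : LinearIndependent F ![1,u,v]
  · obtain ⟨nu, hnu⟩ := hnorm u
    obtain ⟨nv, hnv⟩ := hnorm v
    have huu : u*u = (-nu)•(1:A) := by
      rw [hσu, mul_neg, neg_eq_iff_eq_neg, ← neg_smul] at hnu
      exact hnu
    have hvv : v*v = (-nv)•(1:A) := by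
      rw [hσv, mul_neg, neg_eq_iff_eq_neg, ← neg_smul] at hnv
      exact hnv
    have huB : u ∈ B := sub_mem hx (Submodule.smul_mem _ _ hB1)
    have hvB : v ∈ B := sub_mem hy (Submodule.smul_mem _ _ hB1)
    have hle : Submodule.span F (Set.range ![1,u,v]) ≤ B := by
      rw [Submodule.span_le]
      rintro z ⟨i, rfl⟩
      fin_cases i
      · exact hB1
      · exact huB
      · exact hvB
    have : FiniteDimensional F B := Module.finite_of_finrank_eq_succ hBdim
    have hspan : Submodule.span F (Set.range ![1,u,v]) = B := by
      apply Submodule.eq_of_le_of_finrank_le hle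
      rw [hBdim, finrank_span_eq_card hind, Fintype.card_fin]
    have huvB : u * v ∈ Submodule.span F (Set.range ![1,u,v]) := by
      rw [hspan]; exact hBmul u huB v hvB
    rw [Submodule.mem_span_range_iff_exists_fun] at huvB
    obtain ⟨c, hc⟩ := huvB
    rw [Fin.sum_univ_three] at hc
    simp only [Matrix.cons_val_zero, Matrix.cons_val_one, Matrix.head_cons,
      Matrix.cons_val_two, Matrix.tail_cons] at hc
    set α := c 0; set β := c 1; set γ := c 2
    have huv : u*v = α•(1:A) + β•u + γ•v := hc.symm
    have hvu : v*u = α•(1:A) - β•u - γ•v := by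
      have h := hanti u v
      rw [hσu, hσv, neg_mul_neg] at h
      rw [← h, huv, map_add, map_add, map_smul, map_smul, map_smul, hσ1, hσu, hσv]
      module
    set a := -nu; set b := -nv
    set P := a - γ*γ with hP_def
    set Q := b - β*β with hQ_def
    set R := α + β*γ with hR_def
    obtain ⟨x2, x3, y2, y3, hΦ, hD⟩ :
        ∃ x2 x3 y2 y3 : F, P*(x2*y2) + Q*(x3*y3) + R*(x2*y3 + x3*y2) = 0
          ∧ x2*y3 - x3*y2 ≠ 0 := by
      by_cases hP : P = 0
      · by_cases hQ : Q = 0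
        · exact ⟨1, -1, 1, 1, by rw [hP, hQ]; ring, by
            intro h; apply hchar; linear_combination h⟩
        · exact ⟨0, 1, Q, -R, by ring, by
            intro h; apply hQ; linear_combination -h⟩
      · exact ⟨1, 0, -R, P, by ring, by
          intro h; apply hP; linear_combination h⟩
    set x1 := β*x3 - γ*x2
    set y1 := γ*y2 - β*y3
    have hxy0 : (x1•(1:A) + x2•u + x3•v) * (y1•(1:A) + y2•u + y3•v) = 0 := by
      rw [aux_exp3 x1 x2 x3 y1 y2 y3 a b α β γ u v huu hvv huv hvu]
      have e1 : x1*y1 + a*(x2*y2) + b*(x3*y3) + α*(x2*y3+x3*y2) = 0 := by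
        rw [hP_def, hQ_def, hR_def] at hΦ
        linear_combination hΦ
      have e2 : x1*y2 + x2*y1 + β*(x2*y3 - x3*y2) = 0 := by ring
      have e3 : x1*y3 + x3*y1 + γ*(x2*y3 - x3*y2) = 0 := by ring
      rw [e1, e2, e3]
      simp
    have hyx0 := hrev _ _ hxy0
    rw [aux_exp3 y1 y2 y3 x1 x2 x3 a b α β γ u v huu hvv huv hvu] at hyx0
    have hcoef : ∀ g : Fin 3 → F, g 0 • (1:A) + g 1 • u + g 2 • v = 0 → ∀ i, g i = 0 := by
      intro g hg
      have := Fintype.linearIndependent_iff.mp hind g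
      apply this
      rw [Fin.sum_univ_three]
      simpa using hg
    have hβ0 : β = 0 ∧ γ = 0 := by
      have h1 := hcoef ![y1*x1 + a*(y2*x2) + b*(y3*x3) + α*(y2*x3+y3*x2),
        y1*x2 + y2*x1 + β*(y2*x3 - y3*x2),
        y1*x3 + y3*x1 + γ*(y2*x3 - y3*x2)] (by simpa using hyx0)
      have h2 := h1 1
      have h3 := h1 2
      simp only [Matrix.cons_val_one, Matrix.head_cons, Matrix.cons_val_two,
        Matrix.tail_cons, Matrix.cons_val_zero] at h2 h3
      constructor
      · have : β * (2 * (x2*y3 - x3*y2)) = 0 := by linear_combination -h2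
        rcases mul_eq_zero.mp this with h | h
        · exact h
        · exact absurd (mul_eq_zero.mp h) (by rintro (h'|h') <;> [exact hchar h'; exact hD h'])
      · have : γ * (2 * (x2*y3 - x3*y2)) = 0 := by linear_combination -h3
        rcases mul_eq_zero.mp this with h | h
        · exact h
        · exact absurd (mul_eq_zero.mp h) (by rintro (h'|h') <;> [exact hchar h'; exact hD h'])
    rw [huv, hvu, hβ0.1, hβ0.2]
    simp
  · rw [aux_notindep_comm u v hind, sub_self]

private lemma aux_mpr (F : Type*) [Field F] (A : Type*) [NonAssocRing A] [Module F A]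
    [SMulCommClass F A A] [IsScalarTower F A A]
    (σ : A →ₗ[F] A)
    (hanti : ∀ a b : A, σ (a * b) = σ b * σ a)
    (htrace : ∀ a : A, ∃ c : F, a + σ a = c • (1 : A))
    (hnorm : ∀ a : A, ∃ c : F, a * σ a = c • (1 : A))
    (hcomm : ∀ B : Submodule F A, (1 : A) ∈ B →
        (∀ x ∈ B, ∀ y ∈ B, x * y ∈ B) → Module.finrank F B = 3 →
        (∀ x ∈ B, ∀ y ∈ B, x * y = y * x))
    (a b : A) (hab : a * b = 0) : b * a = 0 := by
  obtain ⟨ta, hta⟩ := htrace a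
  obtain ⟨na, hna⟩ := hnorm a
  obtain ⟨tb, htb⟩ := htrace b
  obtain ⟨nb, hnb⟩ := hnorm b
  have hσa : σ a = ta•(1:A) - a := by rw [← hta]; abel
  have hσb : σ b = tb•(1:A) - b := by rw [← htb]; abel
  have haa : a*a = ta•a - na•(1:A) := by
    have h := hna
    rw [hσa, mul_sub, mul_smul_comm, mul_one] at h
    linear_combination (norm := module) -h
  have hbb : b*b = tb•b - nb•(1:A) := by
    have h := hnb
    rw [hσb, mul_sub, mul_smul_comm, mul_one] at h
    linear_combination (norm := module) -h
  have hba : b*a = tb•a + ta•b - (ta*tb)•(1:A) := by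
    have h := hanti a b
    rw [hab, map_zero, hσa, hσb] at h
    simp only [sub_mul, mul_sub, smul_mul_assoc, mul_smul_comm, one_mul, mul_one,
      smul_smul] at h
    linear_combination (norm := module) -h
  by_cases hind : LinearIndependent F ![1,a,b]
  · set B := Submodule.span F (Set.range ![1,a,b]) with hB
    have h1B : (1:A) ∈ B := Submodule.subset_span ⟨0, rfl⟩
    have haB : a ∈ B := Submodule.subset_span ⟨1, rfl⟩
    have hbB : b ∈ B := Submodule.subset_span ⟨2, rfl⟩
    have hgen : ∀ i j : Fin 3, (![1,a,b] i) * (![1,a,b] j) ∈ B := by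
      intro i j
      fin_cases i <;> fin_cases j
      · show (1:A) * 1 ∈ B; rw [one_mul]; exact h1B
      · show (1:A) * a ∈ B; rw [one_mul]; exact haB
      · show (1:A) * b ∈ B; rw [one_mul]; exact hbB
      · show a * 1 ∈ B; rw [mul_one]; exact haB
      · show a * a ∈ B
        rw [haa]; exact sub_mem (Submodule.smul_mem _ _ haB) (Submodule.smul_mem _ _ h1B)
      · show a * b ∈ B; rw [hab]; exact zero_mem _
      · show b * 1 ∈ B; rw [mul_one]; exact hbB
      · show b * a ∈ B
        rw [hba]
        exact sub_mem (add_mem (Submodule.smul_mem _ _ haB) (Submodule.smul_mem _ _ hbB))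
          (Submodule.smul_mem _ _ h1B)
      · show b * b ∈ B
        rw [hbb]; exact sub_mem (Submodule.smul_mem _ _ hbB) (Submodule.smul_mem _ _ h1B)
    have hclosed : ∀ x ∈ B, ∀ y ∈ B, x * y ∈ B := by
      intro x hx
      induction hx using Submodule.span_induction with
      | mem z hz =>
        obtain ⟨i, rfl⟩ := hz
        intro y hy
        induction hy using Submodule.span_induction with
        | mem w hw => obtain ⟨j, rfl⟩ := hw; exact hgen i j
        | zero => rw [mul_zero]; exact zero_mem _
        | add y z _ _ hy hz => rw [mul_add]; exact add_mem hy hz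
        | smul c y _ hy => rw [mul_smul_comm]; exact Submodule.smul_mem _ _ hy
      | zero => intro y hy; rw [zero_mul]; exact zero_mem _
      | add x z _ _ hx hz => intro y hy; rw [add_mul]; exact add_mem (hx y hy) (hz y hy)
      | smul c x _ hx => intro y hy; rw [smul_mul_assoc]; exact Submodule.smul_mem _ _ (hx y hy)
    have hdim : Module.finrank F B = 3 := by
      rw [hB, finrank_span_eq_card hind, Fintype.card_fin]
    have := hcomm B h1B hclosed hdim a haB b hbB
    rw [← this, hab]
  · rw [← aux_notindep_comm a b hind, hab]

end Aux

/-- An involutive algebra over a field of characteristic ≠ 2 is reversible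
if and only if every 3-dimensional subalgebra is commutative. -/
theorem involutive_reversible_iff_three_dim_subalgebras_comm
    (F : Type*) [Field F] (A : Type*) [NonAssocRing A] [Module F A]
    [SMulCommClass F A A] [IsScalarTower F A A]
    (hchar : (2 : F) ≠ 0)
    (σ : A →ₗ[F] A)
    (hanti : ∀ a b : A, σ (a * b) = σ b * σ a)
    (hinvol : ∀ a : A, σ (σ a) = a)
    (htrace : ∀ a : A, ∃ c : F, a + σ a = c • (1 : A))
    (hnorm : ∀ a : A, ∃ c : F, a * σ a = c • (1 : A)) :
    (∀ a b : A, a * b = 0 → b * a = 0) ↔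
      (∀ B : Submodule F A, (1 : A) ∈ B →
        (∀ x ∈ B, ∀ y ∈ B, x * y ∈ B) → Module.finrank F B = 3 →
        (∀ x ∈ B, ∀ y ∈ B, x * y = y * x)) := by
  have hσ1 : σ (1:A) = 1 := aux_sigma_one σ hanti hinvol hnorm
  constructor
  · intro hrev B hB1 hBmul hBdim x hx y hy
    exact aux_mp F A hchar σ hanti htrace hnorm hσ1 hrev B hB1 hBmul hBdim x hx y hy
  · intro hcomm a b hab
    exact aux_mpr F A σ hanti htrace hnorm hcomm a b hab
end

section
/- Let F be a field of characteristic different from 2. Every reversible involutive F-algebra is von-Neumann finite. -/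
/-- Over a field of characteristic ≠ 2, every reversible involutive algebra is
von-Neumann finite. -/
theorem vonNeumannFinite_of_reversible_involutive
    (F : Type*) [Field F] (A : Type*) [NonAssocRing A] [Module F A]
    [SMulCommClass F A A] [IsScalarTower F A A]
    (hchar : (2 : F) ≠ 0)
    (σ : A →ₗ[F] A)
    (hanti : ∀ a b : A, σ (a * b) = σ b * σ a)
    (hinvol : ∀ a : A, σ (σ a) = a)
    (htrace : ∀ a : A, ∃ c : F, a + σ a = c • (1 : A))
    (hnorm : ∀ a : A, ∃ c : F, a * σ a = c • (1 : A))
    (hrev : ∀ a b : A, a * b = 0 → b * a = 0) :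
    ∀ a b : A, a * b = 1 → b * a = 1 := by
  intro a b hab
  -- σ 1 = 1
  obtain ⟨c1, hc1⟩ := htrace 1
  have hs1 : σ (1 : A) = (c1 - 1) • (1 : A) := by
    have h : σ (1 : A) = c1 • (1 : A) - 1 := by rw [← hc1]; abel
    rw [h, sub_smul, one_smul]
  have hσ1 : σ (1 : A) = 1 := by
    have h2 : σ (σ (1 : A)) = (c1 - 1) • ((c1 - 1) • (1 : A)) := by
      rw [hs1, map_smul, hs1]
    have h3 : σ (1 : A) * σ (1 : A) = (c1 - 1) • ((c1 - 1) • (1 : A)) := by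
      rw [hs1, smul_mul_assoc, mul_smul_comm, one_mul]
    calc σ (1 : A) = σ (1 * 1) := by rw [one_mul]
      _ = σ 1 * σ 1 := hanti 1 1
      _ = σ (σ (1 : A)) := by rw [h3, ← h2]
      _ = 1 := hinvol 1
  obtain ⟨ta, hta⟩ := htrace a
  obtain ⟨na, hna⟩ := hnorm a
  obtain ⟨tb, htb⟩ := htrace b
  obtain ⟨nb, hnb⟩ := hnorm b
  have hsa : σ a = ta • (1 : A) - a := by rw [← hta]; abel
  have hsb : σ b = tb • (1 : A) - b := by rw [← htb]; abel
  -- a * a = ta • a - na • 1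
  have haa : a * a = ta • a - na • (1 : A) := by
    have h := hna
    rw [hsa, mul_sub, mul_smul_comm, mul_one] at h
    rw [← h]; abel
  have hbb : b * b = tb • b - nb • (1 : A) := by
    have h := hnb
    rw [hsb, mul_sub, mul_smul_comm, mul_one] at h
    rw [← h]; abel
  -- b * a = 1 + ta • b + tb • a - (ta*tb) • 1
  have hba : b * a = 1 + ta • b + tb • a - (ta * tb) • (1 : A) := by
    have h := hanti a b
    rw [hab, hσ1, hsa, hsb, sub_mul, mul_sub, mul_sub, smul_mul_assoc,
      smul_mul_assoc, one_mul, mul_smul_comm, mul_one, smul_smul] at h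
    simp only [one_mul] at h
    rw [eq_sub_iff_add_eq] at h
    linear_combination (norm := module) -h
  by_cases hna0 : na = 0
  · by_cases hnb0 : nb = 0
    · -- key trick
      have huv : (a + b - tb • (1 : A)) * (a - b - ta • (1 : A)) = 0 := by
        simp only [sub_mul, add_mul, mul_sub, mul_add, smul_mul_assoc,
          mul_smul_comm, one_mul, mul_one, smul_smul]
        rw [haa, hbb, hab, hba, hna0, hnb0]
        module
      have hvu := hrev _ _ huv
      have hX : (2 : F) • ((ta * tb) • (1 : A) - tb • a - ta • b) = 0 := by
        rw [← hvu]
        simp only [sub_mul, add_mul, mul_sub, mul_add, smul_mul_assoc,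
          mul_smul_comm, one_mul, mul_one, smul_smul]
        rw [haa, hbb, hab, hba, hna0, hnb0]
        module
      have hX0 : (ta * tb) • (1 : A) - tb • a - ta • b = 0 :=
        (smul_eq_zero.mp hX).resolve_left hchar
      rw [hba]
      linear_combination (norm := module) -hX0
    · -- nb ≠ 0
      have hσbσa : (tb • (1 : A) - b) * (ta • (1 : A) - a) = 1 := by
        rw [← hsa, ← hsb, ← hanti, hab, hσ1]
      have hbsb : b * (tb • (1 : A) - b) = nb • (1 : A) := by
        rw [mul_sub, mul_smul_comm, mul_one, hbb]; abel
      have hsbb : (tb • (1 : A) - b) * b = nb • (1 : A) := by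
        rw [sub_mul, smul_mul_assoc, one_mul, hbb]; abel
      have h0 : (tb • (1 : A) - b) * ((ta • (1 : A) - a) - nb⁻¹ • b) = 0 := by
        rw [mul_sub, hσbσa, mul_smul_comm, hsbb, smul_smul,
          inv_mul_cancel₀ hnb0, one_smul, sub_self]
      have h1 := hrev _ _ h0
      rw [sub_mul, smul_mul_assoc, hbsb, smul_smul, inv_mul_cancel₀ hnb0,
        one_smul, sub_eq_zero] at h1
      -- h1 : σa * σb = 1
      have h2 : σ (b * a) = 1 := by
        rw [hanti, hsa, hsb, h1]
      calc b * a = σ (σ (b * a)) := (hinvol _).symm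
        _ = 1 := by rw [h2, hσ1]
  · -- na ≠ 0
    have hasa : a * (ta • (1 : A) - a) = na • (1 : A) := by
      rw [mul_sub, mul_smul_comm, mul_one, haa]; abel
    have hsaa : (ta • (1 : A) - a) * a = na • (1 : A) := by
      rw [sub_mul, smul_mul_assoc, one_mul, haa]; abel
    have h0 : a * (b - na⁻¹ • (ta • (1 : A) - a)) = 0 := by
      rw [mul_sub, hab, mul_smul_comm, hasa, smul_smul,
        inv_mul_cancel₀ hna0, one_smul, sub_self]
    have h1 := hrev _ _ h0
    rw [sub_mul, smul_mul_assoc, hsaa, smul_smul, inv_mul_cancel₀ hna0,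
      one_smul, sub_eq_zero] at h1
    exact h1
end

section
/- Let F be a field of characteristic different from 2 and let A be an involutive F-algebra whose norm n : A → F (defined by a·σ(a) = n(a)·1) is anisotropic, i.e., n(a) = 0 implies a = 0. If A is von-Neumann finite, then A is reversible. -/
/-- Over a field of characteristic ≠ 2, a von-Neumann finite involutive algebra with
anisotropic norm is reversible. -/
theorem reversible_of_vonNeumannFinite_involutive_anisotropic
    (F : Type*) [Field F] (A : Type*) [NonAssocRing A] [Module F A]
    [SMulCommClass F A A] [IsScalarTower F A A]
    (hchar : (2 : F) ≠ 0)
    (σ : A →ₗ[F] A)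
    (hanti : ∀ a b : A, σ (a * b) = σ b * σ a)
    (hinvol : ∀ a : A, σ (σ a) = a)
    (htrace : ∀ a : A, ∃ c : F, a + σ a = c • (1 : A))
    (n : A → F)
    (hnorm : ∀ a : A, a * σ a = n a • (1 : A))
    (haniso : ∀ a : A, n a = 0 → a = 0)
    (hvnf : ∀ a b : A, a * b = 1 → b * a = 1) :
    ∀ a b : A, a * b = 0 → b * a = 0 := by
  intro a b hab
  by_cases ha : a = 0
  · simp [ha]
  · have hna : n a ≠ 0 := fun h => ha (haniso a h)
    obtain ⟨c, hc⟩ := htrace a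
    have h1 : σ a = c • (1 : A) - a := eq_sub_of_add_eq' hc
    have hsa : σ a * a = n a • (1 : A) := by
      have h2 : a * σ a = c • a - a * a := by
        rw [h1, mul_sub, mul_smul_comm, mul_one]
      have h3 : σ a * a = c • a - a * a := by
        rw [h1, sub_mul, smul_mul_assoc, one_mul]
      rw [h3, ← h2, hnorm]
    have key : a * (b + (n a)⁻¹ • σ a) = 1 := by
      rw [mul_add, hab, zero_add, mul_smul_comm, hnorm, smul_smul,
        inv_mul_cancel₀ hna, one_smul]
    have h4 := hvnf _ _ key
    rw [add_mul, smul_mul_assoc, hsa, smul_smul, inv_mul_cancel₀ hna, one_smul] at h4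
    exact add_eq_right.mp h4
end

section
/- Let A be a quadratic F-algebra and let a, b ∈ A. If ab lies in the linear span of {1, a, b}, then the linear span of {1, a, b} is a subalgebra of A (i.e., it contains 1 and is closed under multiplication). -/
/-- In a quadratic algebra, if `a * b` lies in the span of `{1, a, b}`, then this span
is a subalgebra: it contains `1` and is closed under multiplication. -/
theorem span_one_a_b_is_subalgebra_of_quadratic
    (F : Type*) [Field F] (A : Type*) [NonAssocRing A] [Module F A]
    [SMulCommClass F A A] [IsScalarTower F A A]
    (hquad : ∀ a : A, ¬ LinearIndependent F ![(1 : A), a, a * a])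
    (a b : A)
    (hab : a * b ∈ Submodule.span F {(1 : A), a, b}) :
    (1 : A) ∈ Submodule.span F {(1 : A), a, b} ∧
      ∀ x ∈ Submodule.span F {(1 : A), a, b}, ∀ y ∈ Submodule.span F {(1 : A), a, b},
        x * y ∈ Submodule.span F {(1 : A), a, b} := by
  -- Step 1: every square lies in span {1, c}
  have hsq : ∀ c : A, c * c ∈ Submodule.span F {(1 : A), c} := by
    intro c
    have h := hquad c
    rw [Fintype.not_linearIndependent_iff] at h
    obtain ⟨g, hg, i, hi⟩ := h
    have h1mem : (1 : A) ∈ Submodule.span F {(1 : A), c} :=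
      Submodule.subset_span (Set.mem_insert _ _)
    have hcmem : c ∈ Submodule.span F {(1 : A), c} :=
      Submodule.subset_span (Set.mem_insert_of_mem _ rfl)
    have hsum : g 0 • (1 : A) + g 1 • c + g 2 • (c * c) = 0 := by
      simpa [Fin.sum_univ_three] using hg
    by_cases h2 : g 2 = 0
    · by_cases h1 : g 1 = 0
      · have h0 : g 0 ≠ 0 := by fin_cases i <;> simp_all
        have hone : (1 : A) = 0 := by
          rw [h1, h2] at hsum
          simp only [zero_smul, add_zero] at hsum
          exact (smul_eq_zero.mp hsum).resolve_left h0
        have hcc : c * c = 0 := by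
          calc c * c = (c * c) * 1 := (mul_one _).symm
          _ = 0 := by rw [hone, mul_zero]
        rw [hcc]; exact zero_mem _
      · -- g 1 • c = -(g 0 • 1), so c is a multiple of 1
        rw [h2, zero_smul, add_zero] at hsum
        have hc1 : g 1 • c = -(g 0 • (1 : A)) := eq_neg_of_add_eq_zero_right hsum
        have hc : c = (g 1)⁻¹ • (-(g 0 • (1 : A))) := by
          rw [← hc1, inv_smul_smul₀ h1]
        have : c * c = (g 1)⁻¹ • (-(g 0 • (c * 1))) := by
          nth_rewrite 2 [hc]
          rw [mul_smul_comm, mul_neg, mul_smul_comm]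
        rw [this, mul_one]
        exact Submodule.smul_mem _ _ (neg_mem (Submodule.smul_mem _ _ hcmem))
    · have hcc : g 2 • (c * c) = -(g 0 • (1 : A) + g 1 • c) :=
        eq_neg_of_add_eq_zero_right hsum
      have : c * c = (g 2)⁻¹ • (-(g 0 • (1 : A) + g 1 • c)) := by
        rw [← hcc, inv_smul_smul₀ h2]
      rw [this]
      exact Submodule.smul_mem _ _
        (neg_mem (add_mem (Submodule.smul_mem _ _ h1mem) (Submodule.smul_mem _ _ hcmem)))
  set S := Submodule.span F {(1 : A), a, b} with hSdef
  have h1 : (1 : A) ∈ S := Submodule.subset_span (Set.mem_insert _ _)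
  have ha : a ∈ S := Submodule.subset_span (Set.mem_insert_of_mem _ (Set.mem_insert _ _))
  have hb : b ∈ S := Submodule.subset_span (Set.mem_insert_of_mem _ (Set.mem_insert_of_mem _ rfl))
  have haa : a * a ∈ S := by
    refine Submodule.span_le.mpr ?_ (hsq a)
    intro x hx
    rcases hx with h | h
    · rw [h]; exact h1
    · rw [Set.mem_singleton_iff] at h; rw [h]; exact ha
  have hbb : b * b ∈ S := by
    refine Submodule.span_le.mpr ?_ (hsq b)
    intro x hx
    rcases hx with h | h
    · rw [h]; exact h1
    · rw [Set.mem_singleton_iff] at h; rw [h]; exact hb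
  have hsumsq : (a + b) * (a + b) ∈ S := by
    refine Submodule.span_le.mpr ?_ (hsq (a + b))
    intro x hx
    rcases hx with h | h
    · rw [h]; exact h1
    · rw [Set.mem_singleton_iff] at h; rw [h]; exact add_mem ha hb
  have hba : b * a ∈ S := by
    have hexp : b * a = (a + b) * (a + b) - a * a - a * b - b * b := by
      rw [add_mul, mul_add, mul_add]; abel
    rw [hexp]
    exact sub_mem (sub_mem (sub_mem hsumsq haa) hab) hbb
  -- products of generators
  have base : ∀ x ∈ ({(1 : A), a, b} : Set A), ∀ y ∈ ({(1 : A), a, b} : Set A),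
      x * y ∈ S := by
    intro x hx y hy
    simp only [Set.mem_insert_iff, Set.mem_singleton_iff] at hx hy
    rcases hx with rfl | rfl | rfl <;> rcases hy with rfl | rfl | rfl <;>
      (try simp only [one_mul, mul_one]) <;>
      first
        | exact h1
        | exact ha
        | exact hb
        | exact haa
        | exact hab
        | exact hba
        | exact hbb
  have key1 : ∀ x ∈ ({(1 : A), a, b} : Set A), ∀ y ∈ S, x * y ∈ S := by
    intro x hx y hy
    induction hy using Submodule.span_induction with
    | mem y hys => exact base x hx y hys
    | zero => rw [mul_zero]; exact zero_mem _
    | add y z _ _ ihy ihz => rw [mul_add]; exact add_mem ihy ihz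
    | smul k y _ ih => rw [mul_smul_comm]; exact Submodule.smul_mem _ _ ih
  refine ⟨h1, ?_⟩
  intro x hx y hy
  induction hx using Submodule.span_induction with
  | mem x hxs => exact key1 x hxs y hy
  | zero => rw [zero_mul]; exact zero_mem _
  | add u v _ _ ihu ihv => rw [add_mul]; exact add_mem ihu ihv
  | smul k u _ ih => rw [smul_mul_assoc]; exact Submodule.smul_mem _ _ ih
end

section
/- Let A be a quadratic F-algebra. Then A is von-Neumann finite if and only if every 3-dimensional subalgebra of A is von-Neumann finite; and A is reversible if and only if every 3-dimensional subalgebra of A is reversible. -/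
set_option linter.unusedSectionVars false

open Submodule Module

section Aux

variable {F : Type*} [Field F] {A : Type*} [NonAssocRing A] [Module F A]
    [SMulCommClass F A A] [IsScalarTower F A A]

theorem aux_sq_mem (hquad : ∀ a : A, ¬ LinearIndependent F ![(1 : A), a, a * a])
    (a : A) : a * a ∈ Submodule.span F ({1, a} : Set A) := by
  obtain ⟨g, hsum, i, hi⟩ := Fintype.not_linearIndependent_iff.mp (hquad a)
  have hs : g 0 • (1 : A) + g 1 • a + g 2 • (a * a) = 0 := by
    simpa [Fin.sum_univ_three] using hsum
  have h1mem : (1 : A) ∈ Submodule.span F ({1, a} : Set A) :=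
    subset_span (Set.mem_insert _ _)
  have hamem : a ∈ Submodule.span F ({1, a} : Set A) :=
    subset_span (Set.mem_insert_of_mem _ rfl)
  by_cases h2 : g 2 = 0
  · by_cases h1 : g 1 = 0
    · have h0 : g 0 ≠ 0 := by fin_cases i <;> simp_all
      have h10 : (1 : A) = 0 := by
        have : g 0 • (1 : A) = 0 := by simpa [h1, h2] using hs
        rcases smul_eq_zero.mp this with h | h
        · exact absurd h h0
        · exact h
      have : Subsingleton A := subsingleton_of_zero_eq_one h10.symm
      rw [Subsingleton.elim (a * a) 0]
      exact zero_mem _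
    · have hga : g 1 • a = -(g 0 • (1 : A)) := by
        rw [eq_neg_iff_add_eq_zero, add_comm]; simpa [h2] using hs
      have ha : a = (-(g 1)⁻¹ * g 0) • (1 : A) := by
        rw [← inv_smul_smul₀ h1 a, hga, smul_neg, smul_smul, neg_mul, neg_smul]
      have haa : a * a = ((-(g 1)⁻¹ * g 0) * (-(g 1)⁻¹ * g 0)) • (1 : A) := by
        rw [ha]; simp [smul_mul_assoc, mul_smul_comm, smul_smul]
      rw [haa]
      exact smul_mem _ _ h1mem
  · have key : g 2 • (a * a) = -(g 0 • (1 : A) + g 1 • a) := by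
      rw [eq_neg_iff_add_eq_zero, add_comm]; exact hs
    rw [← inv_smul_smul₀ h2 (a * a), key]
    exact smul_mem _ _ (neg_mem (add_mem (smul_mem _ _ h1mem) (smul_mem _ _ hamem)))

theorem aux_lin_mem (hquad : ∀ a : A, ¬ LinearIndependent F ![(1 : A), a, a * a])
    (a b : A) : a * b + b * a ∈ Submodule.span F ({1, a, b} : Set A) := by
  set S : Set A := {1, a, b}
  have h1 : (1 : A) ∈ span F S := subset_span (Set.mem_insert _ _)
  have ha : a ∈ span F S := subset_span (Set.mem_insert_of_mem _ (Set.mem_insert _ _))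
  have hb : b ∈ span F S := subset_span (Set.mem_insert_of_mem _ (Set.mem_insert_of_mem _ rfl))
  have hsq : ∀ c : A, c ∈ span F S → c * c ∈ span F S := fun c hc => by
    refine span_le.mpr ?_ (aux_sq_mem hquad c)
    intro x hx
    rcases hx with rfl | hx
    · exact h1
    · rcases hx with rfl; exact hc
  have hid : a * b + b * a = (a + b) * (a + b) - a * a - b * b := by
    rw [add_mul, mul_add, mul_add]
    abel
  rw [hid]
  exact sub_mem (sub_mem (hsq _ (add_mem ha hb)) (hsq _ ha)) (hsq _ hb)

/-- Key step: in a quadratic algebra, if `a*b = c` with `c` a scalar, and every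
3-dimensional subalgebra satisfies `x*y = c → y*x = c`, then `b*a = c`. -/
theorem aux_key (hquad : ∀ a : A, ¬ LinearIndependent F ![(1 : A), a, a * a])
    (c : A) (hc : c ∈ Submodule.span F ({(1 : A)} : Set A))
    (H : ∀ B : Submodule F A, (1 : A) ∈ B →
        (∀ x ∈ B, ∀ y ∈ B, x * y ∈ B) → Module.finrank F B = 3 →
        ∀ x ∈ B, ∀ y ∈ B, x * y = c → y * x = c)
    (a b : A) (hab : a * b = c) : b * a = c := by
  by_cases hind : LinearIndependent F ![(1 : A), a, b]
  · -- the 3-dimensional case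
    set B : Submodule F A := span F (Set.range ![(1 : A), a, b]) with hB
    have hrange : Set.range ![(1 : A), a, b] = ({1, a, b} : Set A) := by
      ext t
      simp [Fin.exists_fin_succ, Matrix.cons_val_zero, Matrix.cons_val_one]
      tauto
    have h1 : (1 : A) ∈ B := subset_span ⟨0, rfl⟩
    have ha : a ∈ B := subset_span ⟨1, rfl⟩
    have hb : b ∈ B := subset_span ⟨2, rfl⟩
    have hcmem : c ∈ B := span_le.mpr (by intro x hx; rcases hx with rfl; exact h1) hc
    have hba : b * a ∈ B := by
      have := aux_lin_mem hquad a b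
      rw [← hrange] at this
      have h' : b * a = (a * b + b * a) - c := by rw [hab]; abel
      rw [h']
      exact sub_mem this hcmem
    have hsqmem : ∀ x : A, x ∈ B → x * x ∈ B := fun x hx => by
      refine span_le.mpr ?_ (aux_sq_mem hquad x)
      intro y hy
      rcases hy with rfl | hy
      · exact h1
      · rcases hy with rfl; exact hx
    have hgen : ∀ u ∈ Set.range ![(1 : A), a, b], ∀ v ∈ Set.range ![(1 : A), a, b],
        u * v ∈ B := by
      rw [hrange]
      rintro u hu v hv
      rcases hu with rfl | rfl | rfl <;> rcases hv with rfl | rfl | rfl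
      · rw [one_mul]; exact h1
      · rw [one_mul]; exact ha
      · rw [one_mul]; exact hb
      · rw [mul_one]; exact ha
      · exact hsqmem _ ha
      · rw [hab]; exact hcmem
      · rw [mul_one]; exact hb
      · exact hba
      · exact hsqmem _ hb
    have hclosed : ∀ x ∈ B, ∀ y ∈ B, x * y ∈ B := by
      intro x hx y hy
      induction hy using Submodule.span_induction with
      | mem v hv =>
        induction hx using Submodule.span_induction with
        | mem u hu => exact hgen u hu v hv
        | zero => rw [zero_mul]; exact zero_mem _
        | add u w _ _ h1' h2' => rw [add_mul]; exact add_mem h1' h2'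
        | smul r u _ h' => rw [smul_mul_assoc]; exact smul_mem _ _ h'
      | zero => rw [mul_zero]; exact zero_mem _
      | add v w _ _ h1' h2' => rw [mul_add]; exact add_mem h1' h2'
      | smul r v _ h' => rw [mul_smul_comm]; exact smul_mem _ _ h'
    have hrank : Module.finrank F B = 3 := by
      rw [hB, finrank_span_eq_card hind]
      simp
    exact H B h1 hclosed hrank a ha b hb hab
  · -- degenerate case: 1, a, b linearly dependent
    obtain ⟨g, hsum, i, hi⟩ := Fintype.not_linearIndependent_iff.mp hind
    have hs : g 0 • (1 : A) + g 1 • a + g 2 • b = 0 := by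
      simpa [Fin.sum_univ_three] using hsum
    by_cases h2 : g 2 = 0
    · by_cases h1 : g 1 = 0
      · have h0 : g 0 ≠ 0 := by fin_cases i <;> simp_all
        have h10 : (1 : A) = 0 := by
          have : g 0 • (1 : A) = 0 := by simpa [h1, h2] using hs
          rcases smul_eq_zero.mp this with h | h
          · exact absurd h h0
          · exact h
        have : Subsingleton A := subsingleton_of_zero_eq_one h10.symm
        exact Subsingleton.elim _ _
      · -- a is a scalar multiple of 1
        have hga : g 1 • a = -(g 0 • (1 : A)) := by
          rw [eq_neg_iff_add_eq_zero, add_comm]; simpa [h2] using hs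
        have ha : a = (-(g 1)⁻¹ * g 0) • (1 : A) := by
          rw [← inv_smul_smul₀ h1 a, hga, smul_neg, smul_smul, neg_mul, neg_smul]
        have : b * a = a * b := by
          rw [ha]; simp [smul_mul_assoc, mul_smul_comm]
        rw [this, hab]
    · -- b is a combination of 1 and a
      have hgb : g 2 • b = -(g 0 • (1 : A) + g 1 • a) := by
        rw [eq_neg_iff_add_eq_zero, add_comm]; exact hs
      have hbv : b = (-(g 2)⁻¹ * g 0) • (1 : A) + (-(g 2)⁻¹ * g 1) • a := by
        rw [← inv_smul_smul₀ h2 b, hgb, smul_neg, smul_add, smul_smul, smul_smul]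
        rw [neg_mul, neg_mul, neg_smul, neg_smul, neg_add]
      have : b * a = a * b := by
        rw [hbv]
        simp only [add_mul, mul_add, smul_mul_assoc, mul_smul_comm, one_mul, mul_one]
      rw [this, hab]

end Aux


/-- A quadratic algebra is von-Neumann finite iff every 3-dimensional subalgebra is
von-Neumann finite, and reversible iff every 3-dimensional subalgebra is reversible. -/
theorem quadratic_vnf_and_reversible_iff_three_dim_subalgebras
    (F : Type*) [Field F] (A : Type*) [NonAssocRing A] [Module F A]
    [SMulCommClass F A A] [IsScalarTower F A A]
    (hquad : ∀ a : A, ¬ LinearIndependent F ![(1 : A), a, a * a]) :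
    ((∀ a b : A, a * b = 1 → b * a = 1) ↔
      (∀ B : Submodule F A, (1 : A) ∈ B →
        (∀ x ∈ B, ∀ y ∈ B, x * y ∈ B) → Module.finrank F B = 3 →
        ∀ x ∈ B, ∀ y ∈ B, x * y = 1 → y * x = 1)) ∧
    ((∀ a b : A, a * b = 0 → b * a = 0) ↔
      (∀ B : Submodule F A, (1 : A) ∈ B →
        (∀ x ∈ B, ∀ y ∈ B, x * y ∈ B) → Module.finrank F B = 3 →
        ∀ x ∈ B, ∀ y ∈ B, x * y = 0 → y * x = 0)) := by
  constructor
  · constructor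
    · intro h B _ _ _ x _ y _ hxy
      exact h x y hxy
    · intro H a b hab
      exact aux_key hquad 1 (Submodule.subset_span rfl) H a b hab
  · constructor
    · intro h B _ _ _ x _ y _ hxy
      exact h x y hxy
    · intro H a b hab
      exact aux_key hquad 0 (zero_mem _) H a b hab
end

section
/- Let A be a quadratic F-algebra. Then A is both von-Neumann finite and reversible if and only if every 3-dimensional subalgebra of A is commutative. -/
set_option linter.unusedSectionVars false
set_option maxHeartbeats 1000000

section aux
variable {F : Type*} [Field F] {A : Type*} [NonAssocRing A] [Module F A]
    [SMulCommClass F A A] [IsScalarTower F A A]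

lemma aux_quad (hquad : ∀ a : A, ¬ LinearIndependent F ![(1 : A), a, a * a]) (z : A) :
    ∃ s t : F, z * z = s • (1 : A) + t • z := by
  obtain ⟨g, hg, i, hi⟩ := Fintype.not_linearIndependent_iff.mp (hquad z)
  rw [Fin.sum_univ_three] at hg
  simp only [Matrix.cons_val_zero, Matrix.cons_val_one, Matrix.head_cons,
    Matrix.cons_val_two, Matrix.tail_cons] at hg
  by_cases h2 : g 2 = 0
  · by_cases h1 : g 1 = 0
    · have h0 : g 0 ≠ 0 := by fin_cases i <;> simp_all
      have hone : (1 : A) = 0 := by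
        have h : g 0 • (1 : A) = 0 := by rw [h2, h1] at hg; simpa using hg
        exact (smul_eq_zero.mp h).resolve_left h0
      have hz : z = 0 := by rw [← mul_one z, hone, mul_zero]
      exact ⟨0, 0, by simp [hz]⟩
    · rw [h2, zero_smul, add_zero] at hg
      have h3 : g 1 • z = -(g 0 • (1 : A)) := eq_neg_of_add_eq_zero_right hg
      have hz : z = (-(g 0) / g 1) • (1 : A) := by
        calc z = (g 1)⁻¹ • (g 1 • z) := (inv_smul_smul₀ h1 _).symm
          _ = (-(g 0) / g 1) • (1 : A) := by
              rw [h3]; match_scalars <;> (field_simp; try ring)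
      exact ⟨0, -(g 0) / g 1, by
        rw [zero_smul, zero_add]
        nth_rewrite 1 [hz]
        rw [smul_mul_assoc, one_mul]⟩
  · refine ⟨-(g 0) / g 2, -(g 1) / g 2, ?_⟩
    have h3 : g 2 • (z * z) = -(g 0 • (1 : A) + g 1 • z) := eq_neg_of_add_eq_zero_right hg
    calc z * z = (g 2)⁻¹ • (g 2 • (z * z)) := (inv_smul_smul₀ h2 _).symm
      _ = (-(g 0) / g 2) • (1 : A) + (-(g 1) / g 2) • z := by
          rw [h3]; match_scalars <;> (field_simp; try ring)

lemma aux_comm (x : A) (s t : F) :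
    x * (s • (1 : A) + t • x) = (s • (1 : A) + t • x) * x := by
  simp [mul_add, add_mul, mul_smul_comm, smul_mul_assoc]


variable {F : Type*} [Field F] {A : Type*} [NonAssocRing A] [Module F A]
    [SMulCommClass F A A] [IsScalarTower F A A]

lemma aux_smul_one_comm (y : A) (s : F) : (s • (1 : A)) * y = y * (s • (1 : A)) := by
  rw [smul_mul_assoc, one_mul, mul_smul_comm, mul_one]

/-- If `1, x, y` are linearly dependent, then `x` and `y` commute. -/
lemma aux_comm_of_not_li {x y : A} (hdep : ¬ LinearIndependent F ![(1 : A), x, y]) :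
    x * y = y * x := by
  obtain ⟨g, hg, i, hi⟩ := Fintype.not_linearIndependent_iff.mp hdep
  rw [Fin.sum_univ_three] at hg
  simp only [Matrix.cons_val_zero, Matrix.cons_val_one, Matrix.head_cons,
    Matrix.cons_val_two, Matrix.tail_cons] at hg
  by_cases h2 : g 2 = 0
  · by_cases h1 : g 1 = 0
    · have h0 : g 0 ≠ 0 := by fin_cases i <;> simp_all
      have hone : (1 : A) = 0 := by
        have h : g 0 • (1 : A) = 0 := by rw [h2, h1] at hg; simpa using hg
        exact (smul_eq_zero.mp h).resolve_left h0
      have hz : ∀ a : A, a = 0 := fun a => by rw [← mul_one a, hone, mul_zero]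
      rw [hz (x * y), hz (y * x)]
    · rw [h2, zero_smul, add_zero] at hg
      have h3 : g 1 • x = -(g 0 • (1 : A)) := eq_neg_of_add_eq_zero_right hg
      have hx : x = (-(g 0) / g 1) • (1 : A) := by
        calc x = (g 1)⁻¹ • (g 1 • x) := (inv_smul_smul₀ h1 _).symm
          _ = (-(g 0) / g 1) • (1 : A) := by
              rw [h3]; match_scalars <;> (field_simp; try ring)
      rw [hx, aux_smul_one_comm]
  · have h3 : g 2 • y = -(g 0 • (1 : A) + g 1 • x) := eq_neg_of_add_eq_zero_right hg
    have hy : y = (-(g 0) / g 2) • (1 : A) + (-(g 1) / g 2) • x := by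
      calc y = (g 2)⁻¹ • (g 2 • y) := (inv_smul_smul₀ h2 _).symm
        _ = _ := by rw [h3]; match_scalars <;> (field_simp; try ring)
    rw [hy]
    simp [mul_add, add_mul, mul_smul_comm, smul_mul_assoc]

/-- In a quadratic algebra, `a*b + b*a ∈ span {1, a, b}` with explicit coefficients. -/
lemma aux_sum_span (hquad : ∀ a : A, ¬ LinearIndependent F ![(1 : A), a, a * a]) (a b : A)
    (aux_quad : ∀ z : A, ∃ s t : F, z * z = s • (1 : A) + t • z) :
    ∃ e0 e1 e2 : F, a * b + b * a = e0 • (1 : A) + e1 • a + e2 • b := by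
  obtain ⟨s, t, hab⟩ := aux_quad (a + b)
  obtain ⟨s1, t1, ha⟩ := aux_quad a
  obtain ⟨s2, t2, hb⟩ := aux_quad b
  refine ⟨s - s1 - s2, t - t1, t - t2, ?_⟩
  have hexp : a * b + b * a = (a + b) * (a + b) - a * a - b * b := by
    rw [mul_add, add_mul, add_mul]; abel
  rw [hexp, hab, ha, hb]; module

/-- extraction from span of a triple -/
lemma aux_mem_span_triple {x a b c : A} (hx : x ∈ Submodule.span F {a, b, c}) :
    ∃ p q r : F, x = p • a + q • b + r • c := by
  rw [Submodule.mem_span_insert] at hx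
  obtain ⟨p, z, hz, rfl⟩ := hx
  rw [Submodule.mem_span_insert] at hz
  obtain ⟨q, w, hw, rfl⟩ := hz
  rw [Submodule.mem_span_singleton] at hw
  obtain ⟨r, rfl⟩ := hw
  exact ⟨p, q, r, by abel⟩

lemma aux_expand_sub (x y : A) (q r : F) :
    (x - r • (1 : A)) * (y - q • (1 : A)) = x * y - q • x - r • y + (r * q) • (1 : A) := by
  simp only [sub_mul, mul_sub, mul_smul_comm, smul_mul_assoc, smul_smul, mul_one, one_mul]
  module

lemma aux_li_coeff {x y : A} (hli : LinearIndependent F ![(1 : A), x, y]) {c0 c1 c2 : F}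
    (h : c0 • (1 : A) + c1 • x + c2 • y = 0) : c0 = 0 ∧ c1 = 0 ∧ c2 = 0 := by
  have := Fintype.linearIndependent_iff.mp hli ![c0, c1, c2] (by
    rw [Fin.sum_univ_three]
    simpa using h)
  exact ⟨this 0, this 1, this 2⟩

lemma aux_range (x y : A) : Set.range ![(1 : A), x, y] = {1, x, y} := by
  ext z
  simp [Fin.exists_fin_two, Fin.exists_fin_succ, eq_comm]
  tauto


end aux

/-- A quadratic algebra is both von-Neumann finite and reversible if and only if every
3-dimensional subalgebra is commutative. -/
theorem quadratic_vnf_and_reversible_iff_three_dim_subalgebras_comm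
    (F : Type*) [Field F] (A : Type*) [NonAssocRing A] [Module F A]
    [SMulCommClass F A A] [IsScalarTower F A A]
    (hquad : ∀ a : A, ¬ LinearIndependent F ![(1 : A), a, a * a]) :
    ((∀ a b : A, a * b = 1 → b * a = 1) ∧ (∀ a b : A, a * b = 0 → b * a = 0)) ↔
      (∀ B : Submodule F A, (1 : A) ∈ B →
        (∀ x ∈ B, ∀ y ∈ B, x * y ∈ B) → Module.finrank F B = 3 →
        ∀ x ∈ B, ∀ y ∈ B, x * y = y * x) := by
  constructor
  · rintro ⟨hVNF, hRev⟩ B h1B hmulB hrank x hx y hy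
    by_cases hli : LinearIndependent F ![(1 : A), x, y]
    · have hfd : FiniteDimensional F B :=
        FiniteDimensional.of_finrank_pos (by rw [hrank]; norm_num)
      have hspan_le : Submodule.span F {(1 : A), x, y} ≤ B := by
        rw [Submodule.span_le]
        intro z hz
        simp only [Set.mem_insert_iff, Set.mem_singleton_iff] at hz
        rcases hz with rfl | rfl | rfl
        exacts [h1B, hx, hy]
      have hsr : Module.finrank F (Submodule.span F {(1 : A), x, y}) = 3 := by
        have h := finrank_span_eq_card (R := F) hli
        rw [aux_range] at h
        simpa using h
      have hBeq : Submodule.span F {(1 : A), x, y} = B :=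
        Submodule.eq_of_le_of_finrank_le hspan_le (by rw [hrank, hsr])
      have hxyB : x * y ∈ Submodule.span F {(1 : A), x, y} := hBeq ▸ hmulB x hx y hy
      have hyxB : y * x ∈ Submodule.span F {(1 : A), x, y} := hBeq ▸ hmulB y hy x hx
      obtain ⟨p, q, r, hxy⟩ := aux_mem_span_triple hxyB
      obtain ⟨p', q', r', hyx⟩ := aux_mem_span_triple hyxB
      have huv : (x - r • (1 : A)) * (y - q • (1 : A)) = (p + r * q) • (1 : A) := by
        rw [aux_expand_sub, hxy]; module
      have hvu : (y - q • (1 : A)) * (x - r • (1 : A)) = (p + r * q) • (1 : A) := by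
        by_cases hc : p + r * q = 0
        · rw [hc, zero_smul] at huv ⊢
          exact hRev _ _ huv
        · have h1 : (x - r • (1 : A)) * ((p + r * q)⁻¹ • (y - q • (1 : A))) = 1 := by
            rw [mul_smul_comm, huv, smul_smul, inv_mul_cancel₀ hc, one_smul]
          have h2 := hVNF _ _ h1
          calc (y - q • (1 : A)) * (x - r • (1 : A))
              = ((p + r * q) • ((p + r * q)⁻¹ • (y - q • (1 : A)))) * (x - r • (1 : A)) := by
                rw [smul_inv_smul₀ hc]
            _ = (p + r * q) • (((p + r * q)⁻¹ • (y - q • (1 : A))) * (x - r • (1 : A))) :=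
                smul_mul_assoc _ _ _
            _ = (p + r * q) • (1 : A) := by rw [h2]
      have h4 : (p' - p) • (1 : A) + (q' - q) • x + (r' - r) • y = 0 := by
        have h5 : (p' - p) • (1 : A) + (q' - q) • x + (r' - r) • y
            = (y * x - r • y - q • x + (q * r) • (1 : A)) - (p + r * q) • (1 : A) := by
          rw [hyx]; module
        rw [h5, ← aux_expand_sub y x r q, hvu, sub_self]
      obtain ⟨e0, e1, e2⟩ := aux_li_coeff hli h4
      rw [sub_eq_zero] at e0 e1 e2
      rw [hxy, hyx, e0, e1, e2]
    · exact aux_comm_of_not_li hli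
  · intro hcomm
    have key : ∀ a b : A, (∃ c : F, a * b = c • (1 : A)) → b * a = a * b := by
      rintro a b ⟨c, hab⟩
      by_cases hli : LinearIndependent F ![(1 : A), a, b]
      · set B := Submodule.span F ({1, a, b} : Set A) with hBdef
        have h1B : (1 : A) ∈ B := Submodule.subset_span (by simp)
        have haB : a ∈ B := Submodule.subset_span (by simp)
        have hbB : b ∈ B := Submodule.subset_span (by simp)
        have combo : ∀ c0 c1 c2 : F, c0 • (1 : A) + c1 • a + c2 • b ∈ B := fun c0 c1 c2 =>
          add_mem (add_mem (Submodule.smul_mem _ _ h1B) (Submodule.smul_mem _ _ haB))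
            (Submodule.smul_mem _ _ hbB)
        have hbaB : b * a ∈ B := by
          obtain ⟨e0, e1, e2, hsum⟩ := aux_sum_span hquad a b (aux_quad hquad)
          have hba : b * a = (e0 - c) • (1 : A) + e1 • a + e2 • b := by
            have h1 : b * a = (e0 • (1 : A) + e1 • a + e2 • b) - a * b := by
              rw [← hsum]; abel
            rw [h1, hab]; module
          rw [hba]; exact combo _ _ _
        obtain ⟨s1, t1, ha2⟩ := aux_quad hquad a
        obtain ⟨s2, t2, hb2⟩ := aux_quad hquad b
        have genmul : ∀ u v : A, u ∈ ({1, a, b} : Set A) → v ∈ ({1, a, b} : Set A) → u * v ∈ B := by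
          intro u v hu hv
          simp only [Set.mem_insert_iff, Set.mem_singleton_iff] at hu hv
          rcases hu with rfl | rfl | rfl <;> rcases hv with rfl | rfl | rfl
          · rw [one_mul]; exact h1B
          · rw [one_mul]; exact haB
          · rw [one_mul]; exact hbB
          · rw [mul_one]; exact haB
          · rw [ha2]
            exact add_mem (Submodule.smul_mem _ _ h1B) (Submodule.smul_mem _ _ haB)
          · rw [hab]; exact Submodule.smul_mem _ _ h1B
          · rw [mul_one]; exact hbB
          · exact hbaB
          · rw [hb2]
            exact add_mem (Submodule.smul_mem _ _ h1B) (Submodule.smul_mem _ _ hbB)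
        have hmulB : ∀ x ∈ B, ∀ y ∈ B, x * y ∈ B := by
          intro x hx y hy
          refine Submodule.span_induction₂ (p := fun x y _ _ => x * y ∈ B) genmul ?_ ?_ ?_ ?_ ?_ ?_ hx hy
          · intro y _; rw [zero_mul]; exact zero_mem _
          · intro x _; rw [mul_zero]; exact zero_mem _
          · intro x y z _ _ _ h1 h2; rw [add_mul]; exact add_mem h1 h2
          · intro x y z _ _ _ h1 h2; rw [mul_add]; exact add_mem h1 h2
          · intro t x y _ _ h1; rw [smul_mul_assoc]; exact Submodule.smul_mem _ _ h1
          · intro t x y _ _ h1; rw [mul_smul_comm]; exact Submodule.smul_mem _ _ h1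
        have hrank : Module.finrank F B = 3 := by
          have h := finrank_span_eq_card (R := F) hli
          rw [aux_range] at h
          simpa using h
        exact (hcomm B h1B hmulB hrank a haB b hbB).symm
      · exact (aux_comm_of_not_li hli).symm
    refine ⟨fun a b hab => ?_, fun a b hab => ?_⟩
    · rw [key a b ⟨1, by rw [hab, one_smul]⟩, hab]
    · rw [key a b ⟨0, by rw [hab, zero_smul]⟩, hab]
end

section
/- Let F be a field of characteristic different from 2 and let B be a 3-dimensional non-commutative involutive F-algebra with involution σ. Then there exist elements u, v spanning the 2-dimensional subspace Im B = {x ∈ B : σ(x) = −x} such that uv − vu = 2u, and moreover either u² = 0 or uv + vu = 0. -/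
theorem aux_finrank_span_pair (F : Type*) [Field F] (B : Type*) [AddCommGroup B] [Module F B]
    (u v : B) (h : LinearIndependent F ![u, v]) :
    Module.finrank F (Submodule.span F {u, v}) = 2 := by
  have h2 : Set.range ![u, v] = {u, v} := by
    rw [Matrix.range_cons, Matrix.range_cons, Matrix.range_empty]
    simp [Set.pair_comm v u]
  have := finrank_span_eq_card h
  rw [h2] at this
  simpa using this


/-- In a 3-dimensional non-commutative involutive algebra over a field of
characteristic ≠ 2, there is a basis `u, v` of the imaginary space
`Im B = {x | σ x = -x}` with `u*v - v*u = 2u`, and either `u² = 0` or `u*v + v*u = 0`. -/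
theorem exists_basis_of_three_dim_noncommutative_involutive
    (F : Type*) [Field F] (B : Type*) [NonAssocRing B] [Module F B]
    [SMulCommClass F B B] [IsScalarTower F B B]
    (hchar : (2 : F) ≠ 0)
    (σ : B →ₗ[F] B)
    (hanti : ∀ a b : B, σ (a * b) = σ b * σ a)
    (hinvol : ∀ a : B, σ (σ a) = a)
    (htrace : ∀ a : B, ∃ c : F, a + σ a = c • (1 : B))
    (hnorm : ∀ a : B, ∃ c : F, a * σ a = c • (1 : B))
    (hdim : Module.finrank F B = 3)
    (hnoncomm : ¬ ∀ a b : B, a * b = b * a) :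
    ∃ u v : B, σ u = -u ∧ σ v = -v ∧
      (∀ x : B, x ∈ Submodule.span F {u, v} ↔ σ x = -x) ∧
      Module.finrank F (Submodule.span F {u, v}) = 2 ∧
      u * v - v * u = (2 : F) • u ∧
      (u * u = 0 ∨ u * v + v * u = 0) := by
  classical
  have hfin : FiniteDimensional F B := Module.finite_of_finrank_pos (by rw [hdim]; norm_num)
  have hnt : Nontrivial B := Module.nontrivial_of_finrank_pos (R := F) (by rw [hdim]; norm_num)
  have hone : (1:B) ≠ 0 := one_ne_zero
  have hσ1 : σ (1:B) = 1 := by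
    have h2 : σ (σ (1:B)) = σ 1 * σ (σ 1) := by simpa using hanti (σ 1) 1
    rw [hinvol] at h2
    simpa using h2.symm
  have hinj : ∀ c : F, c • (1:B) = 0 → c = 0 := by
    intro c hc
    by_contra h
    have h1 : (1:B) = 0 := by
      calc (1:B) = (c⁻¹ * c) • (1:B) := by rw [inv_mul_cancel₀ h, one_smul]
      _ = c⁻¹ • (c • (1:B)) := by rw [mul_smul]
      _ = 0 := by rw [hc, smul_zero]
    exact hone h1
  set S : Submodule F B := LinearMap.ker (σ + LinearMap.id) with hSdef
  have memS : ∀ z : B, z ∈ S ↔ σ z = -z := by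
    intro z
    simp [hSdef, LinearMap.mem_ker, add_eq_zero_iff_eq_neg]
  have hsub : ∀ a : B, a - σ a ∈ S := by
    intro a
    rw [memS, map_sub, hinvol]
    abel
  have hS_sq : ∀ x ∈ S, ∃ c : F, x * x = c • (1:B) := by
    intro x hx
    obtain ⟨c, hc⟩ := hnorm x
    rw [(memS x).1 hx] at hc
    refine ⟨-c, ?_⟩
    rw [neg_smul, ← hc, mul_neg, neg_neg]
  have hS_ac : ∀ x ∈ S, ∀ y ∈ S, ∃ c : F, x * y + y * x = c • (1:B) := by
    intro x hx y hy
    obtain ⟨c1, h1⟩ := hS_sq x hx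
    obtain ⟨c2, h2⟩ := hS_sq y hy
    obtain ⟨c3, h3⟩ := hS_sq (x + y) (S.add_mem hx hy)
    refine ⟨c3 - c1 - c2, ?_⟩
    have e : (x + y) * (x + y) = x*x + (x*y + y*x) + y*y := by
      rw [add_mul, mul_add, mul_add]; abel
    rw [h3, h1, h2] at e
    have e2 : x*y + y*x = c3 • (1:B) - c1 • (1:B) - c2 • (1:B) := by
      rw [e]; abel
    rw [e2, sub_smul, sub_smul]
  have hS_comm : ∀ x ∈ S, ∀ y ∈ S, x * y - y * x ∈ S := by
    intro x hx y hy
    rw [memS, map_sub, hanti, hanti, (memS x).1 hx, (memS y).1 hy, neg_mul_neg, neg_mul_neg]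
    abel
  have hdimS : Module.finrank F S = 2 := by
    have hsup : (Submodule.span F {(1:B)}) ⊔ S = ⊤ := by
      rw [eq_top_iff]
      rintro a -
      obtain ⟨c, hc⟩ := htrace a
      have h1 : (2⁻¹ * c) • (1:B) ∈ Submodule.span F {(1:B)} :=
        Submodule.smul_mem _ _ (Submodule.mem_span_singleton_self _)
      have h2 : (2⁻¹ : F) • (a - σ a) ∈ S := S.smul_mem _ (hsub a)
      have key : a = (2⁻¹ * c) • (1:B) + (2⁻¹ : F) • (a - σ a) := by
        rw [mul_smul, ← hc, ← smul_add]
        have e3 : a + σ a + (a - σ a) = (2:F) • a := by rw [two_smul]; abel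
        rw [e3, ← mul_smul, inv_mul_cancel₀ hchar, one_smul]
      rw [key]
      exact Submodule.add_mem _ (Submodule.mem_sup_left h1) (Submodule.mem_sup_right h2)
    have hinf : (Submodule.span F {(1:B)}) ⊓ S = ⊥ := by
      rw [eq_bot_iff]
      intro z hz
      obtain ⟨hz1, hz2⟩ := Submodule.mem_inf.1 hz
      obtain ⟨c, rfl⟩ := Submodule.mem_span_singleton.1 hz1
      rw [memS, map_smul, hσ1] at hz2
      have h3 : (2 * c) • (1:B) = 0 := by
        rw [two_mul, add_smul]
        nth_rewrite 2 [hz2]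
        exact add_neg_cancel _
      have hc0 : c = 0 := by
        rcases mul_eq_zero.1 (hinj _ h3) with h | h
        · exact absurd h hchar
        · exact h
      simp [hc0]
    have heq := Submodule.finrank_sup_add_finrank_inf_eq (Submodule.span F {(1:B)}) S
    rw [hsup, hinf, finrank_top, hdim, finrank_bot, finrank_span_singleton hone] at heq
    omega
  push_neg at hnoncomm
  obtain ⟨a, b, hab⟩ := hnoncomm
  set x : B := a - σ a with hxdef
  set y : B := b - σ b with hydef
  have hxS : x ∈ S := hsub a
  have hyS : y ∈ S := hsub b
  set u : B := x * y - y * x with hudef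
  have huS : u ∈ S := hS_comm x hxS y hyS
  have hu0 : u ≠ 0 := by
    obtain ⟨ta, hta⟩ := htrace a
    obtain ⟨tb, htb⟩ := htrace b
    have hsa : σ a = ta • (1:B) - a := by rw [← hta]; abel
    have hsb : σ b = tb • (1:B) - b := by rw [← htb]; abel
    have hx2 : x = (2:F) • a - ta • (1:B) := by rw [hxdef, hsa, two_smul]; abel
    have hy2 : y = (2:F) • b - tb • (1:B) := by rw [hydef, hsb, two_smul]; abel
    have hxy : u = ((2:F)*2) • (a * b - b * a) := by
      rw [hudef, hx2, hy2]
      simp only [sub_mul, mul_sub, smul_mul_assoc, mul_smul_comm, one_mul, mul_one,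
        smul_smul, smul_sub]
      module
    rw [hxy]
    exact smul_ne_zero (mul_ne_zero hchar hchar) (sub_ne_zero.2 hab)
  have key0 : ∀ (k : F) (p q : B), p = k • q → p * q - q * p = 0 := by
    intro k p q h
    rw [h, smul_mul_assoc, mul_smul_comm, sub_self]
  have hxy_li : LinearIndependent F ![x, y] := by
    rw [LinearIndependent.pair_iff]
    intro s t hst
    have hs : s = 0 := by
      by_contra hs
      have hx' : x = (-(s⁻¹ * t)) • y := by
        have h1 : s • x = -(t • y) := by
          rw [eq_neg_iff_add_eq_zero]; exact hst
        calc x = s⁻¹ • (s • x) := by rw [smul_smul, inv_mul_cancel₀ hs, one_smul]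
        _ = (-(s⁻¹ * t)) • y := by rw [h1, smul_neg, smul_smul, ← neg_smul]
      exact hu0 (by rw [hudef]; exact key0 _ _ _ hx')
    subst hs
    simp only [zero_smul, zero_add] at hst
    have ht : t = 0 := by
      rcases smul_eq_zero.1 hst with h | h
      · exact h
      · exfalso; apply hu0; rw [hudef, h]; simp
    exact ⟨rfl, ht⟩
  have hspanxy : Submodule.span F {x, y} = S := by
    apply Submodule.eq_of_le_of_finrank_eq
    · rw [Submodule.span_le, Set.insert_subset_iff, Set.singleton_subset_iff]
      exact ⟨hxS, hyS⟩
    · rw [aux_finrank_span_pair F B x y hxy_li, hdimS]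
  obtain ⟨α, β, hαβ⟩ := Submodule.mem_span_pair.1
    (show u ∈ Submodule.span F {x, y} by rw [hspanxy]; exact huS)
  have hbux : u * x - x * u = (-β) • u := by
    have e : (α • x + β • y) * x - x * (α • x + β • y) = (-β) • (x * y - y * x) := by
      simp only [add_mul, mul_add, smul_mul_assoc, mul_smul_comm, neg_smul, smul_sub]
      module
    rw [hαβ, ← hudef] at e
    exact e
  have hbuy : u * y - y * u = α • u := by
    have e : (α • x + β • y) * y - y * (α • x + β • y) = α • (x * y - y * x) := by
      simp only [add_mul, mul_add, smul_mul_assoc, mul_smul_comm, smul_sub]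
      module
    rw [hαβ, ← hudef] at e
    exact e
  have hαβ0 : α ≠ 0 ∨ β ≠ 0 := by
    by_contra h
    push_neg at h
    apply hu0
    rw [← hαβ, h.1, h.2]; simp
  obtain ⟨w, hwS, hbw⟩ : ∃ w : B, w ∈ S ∧ u * w - w * u = (2:F) • u := by
    rcases hαβ0 with hα | hβ
    · refine ⟨(2 * α⁻¹) • y, S.smul_mem _ hyS, ?_⟩
      rw [mul_smul_comm, smul_mul_assoc, ← smul_sub, hbuy, smul_smul, mul_assoc,
        inv_mul_cancel₀ hα, mul_one]
    · refine ⟨(-(2 * β⁻¹)) • x, S.smul_mem _ hxS, ?_⟩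
      rw [mul_smul_comm, smul_mul_assoc, ← smul_sub, hbux, smul_smul, neg_mul_neg,
        mul_assoc, inv_mul_cancel₀ hβ, mul_one]
  -- common finishing step
  have final : ∀ v : B, v ∈ S → u * v - v * u = (2:F) • u →
      (u * u = 0 ∨ u * v + v * u = 0) →
      ∃ u v : B, σ u = -u ∧ σ v = -v ∧
        (∀ x : B, x ∈ Submodule.span F {u, v} ↔ σ x = -x) ∧
        Module.finrank F (Submodule.span F {u, v}) = 2 ∧
        u * v - v * u = (2 : F) • u ∧
        (u * u = 0 ∨ u * v + v * u = 0) := by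
    intro v hvS hbv hor
    have hli : LinearIndependent F ![u, v] := by
      rw [LinearIndependent.pair_iff]
      intro s t hst
      have ht : t = 0 := by
        by_contra ht
        have hv : v = (-(t⁻¹ * s)) • u := by
          have h1 : t • v = -(s • u) := by
            rw [eq_neg_iff_add_eq_zero, add_comm]; exact hst
          calc v = t⁻¹ • (t • v) := by rw [smul_smul, inv_mul_cancel₀ ht, one_smul]
          _ = (-(t⁻¹ * s)) • u := by rw [h1, smul_neg, smul_smul, ← neg_smul]
        have h2 : u * v - v * u = 0 := by
          rw [hv, mul_smul_comm, smul_mul_assoc, sub_self]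
        have h3 : (2:F) • u = 0 := by rw [← hbv, h2]
        rcases smul_eq_zero.1 h3 with h | h
        · exact hchar h
        · exact hu0 h
      subst ht
      simp only [zero_smul, add_zero] at hst
      have hs : s = 0 := by
        rcases smul_eq_zero.1 hst with h | h
        · exact h
        · exact absurd h hu0
      exact ⟨hs, rfl⟩
    have hspan : Submodule.span F {u, v} = S := by
      apply Submodule.eq_of_le_of_finrank_eq
      · rw [Submodule.span_le, Set.insert_subset_iff, Set.singleton_subset_iff]
        exact ⟨huS, hvS⟩
      · rw [aux_finrank_span_pair F B u v hli, hdimS]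
    refine ⟨u, v, (memS u).1 huS, (memS v).1 hvS, ?_, ?_, hbv, hor⟩
    · intro z
      rw [hspan]
      exact memS z
    · rw [hspan, hdimS]
  obtain ⟨c, hc⟩ := hS_sq u huS
  obtain ⟨d, hd⟩ := hS_ac u huS w hwS
  by_cases hcc : u * u = 0
  · exact final w hwS hbw (Or.inl hcc)
  · have hc0 : c ≠ 0 := fun h => hcc (by rw [hc, h, zero_smul])
    set v : B := w + (-(d * (2 * c)⁻¹)) • u with hvdef
    have hvS : v ∈ S := S.add_mem hwS (S.smul_mem _ huS)
    have hbv : u * v - v * u = (2:F) • u := by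
      rw [hvdef, mul_add, add_mul, mul_smul_comm, smul_mul_assoc]
      have e : u * w + (-(d * (2*c)⁻¹)) • (u*u) - (w * u + (-(d * (2*c)⁻¹)) • (u*u))
          = u * w - w * u := by abel
      rw [e]
      exact hbw
    have hav : u * v + v * u = 0 := by
      rw [hvdef, mul_add, add_mul, mul_smul_comm, smul_mul_assoc]
      have e : u * w + (-(d * (2*c)⁻¹)) • (u*u) + (w * u + (-(d * (2*c)⁻¹)) • (u*u))
          = (u * w + w * u) + ((2:F) * (-(d * (2*c)⁻¹))) • (u*u) := by
        rw [mul_smul]; rw [two_smul]; abel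
      rw [e, hd, hc, smul_smul, ← add_smul]
      have e2 : d + 2 * -(d * (2 * c)⁻¹) * c = 0 := by
        field_simp
        ring
      rw [e2, zero_smul]
    exact final v hvS hbv (Or.inr hav)
end

section
/- Let F be a field and let A be a 3-dimensional unital F-algebra without zero divisors (ab = 0 implies a = 0 or b = 0) that is non-commutative and not quadratic. Then A is reversible but not von-Neumann finite. -/
/-- A 3-dimensional unital algebra without zero divisors that is non-commutative and
not quadratic is reversible but not von-Neumann finite. -/
theorem reversible_not_vonNeumannFinite_of_three_dim_division_nonquadratic
    (F : Type*) [Field F] (A : Type*) [NonAssocRing A] [Module F A]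
    [SMulCommClass F A A] [IsScalarTower F A A]
    (hdim : Module.finrank F A = 3)
    (hnzd : ∀ a b : A, a * b = 0 → a = 0 ∨ b = 0)
    (hnoncomm : ¬ ∀ a b : A, a * b = b * a)
    (hnonquad : ∃ a : A, LinearIndependent F ![(1 : A), a, a * a]) :
    (∀ a b : A, a * b = 0 → b * a = 0) ∧
      ¬ (∀ a b : A, a * b = 1 → b * a = 1) := by
  constructor
  · intro a b hab
    rcases hnzd a b hab with h | h <;> simp [h]
  · intro hvnf
    obtain ⟨u, hu⟩ := hnonquad
    have hfd : FiniteDimensional F A := FiniteDimensional.of_finrank_pos (by omega)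
    have hcard : Fintype.card (Fin 3) = Module.finrank F A := by simp [hdim]
    let b : Module.Basis (Fin 3) F A := basisOfLinearIndependentOfCardEqFinrank hu hcard
    have hb : ∀ i, b i = ![(1 : A), u, u * u] i := fun i => by
      simp [b, coe_basisOfLinearIndependentOfCardEqFinrank]
    have hu0 : u ≠ 0 := by
      have := hu.ne_zero 1
      simpa using this
    -- left multiplication by u is surjective
    have hLinj : Function.Injective (LinearMap.mulLeft F u) := by
      intro x y hxy
      have : u * (x - y) = 0 := by
        simp only [LinearMap.mulLeft_apply] at hxy
        rw [mul_sub, hxy, sub_self]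
      rcases hnzd _ _ this with h | h
      · exact absurd h hu0
      · exact sub_eq_zero.mp h
    obtain ⟨v, hv⟩ := (LinearMap.injective_iff_surjective.mp hLinj) 1
    simp only [LinearMap.mulLeft_apply] at hv
    have hvu : v * u = 1 := hvnf u v hv
    -- write v in the basis
    have hrepr := b.sum_repr v
    set α := b.repr v 0 with hα
    set β := b.repr v 1 with hβ
    set γ := b.repr v 2 with hγ
    have hvdec : v = α • (1 : A) + β • u + γ • (u * u) := by
      rw [← hrepr, Fin.sum_univ_three, hb 0, hb 1, hb 2]
      simp
      rfl
    have huv' : α • u + β • (u * u) + γ • (u * (u * u)) = 1 := by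
      calc α • u + β • (u * u) + γ • (u * (u * u))
          = u * (α • (1 : A) + β • u + γ • (u * u)) := by
            simp [mul_add, mul_smul_comm]
        _ = 1 := by rw [← hvdec, hv]
    have hvu' : α • u + β • (u * u) + γ • ((u * u) * u) = 1 := by
      calc α • u + β • (u * u) + γ • ((u * u) * u)
          = (α • (1 : A) + β • u + γ • (u * u)) * u := by
            simp [add_mul, smul_mul_assoc]
        _ = 1 := by rw [← hvdec, hvu]
    by_cases hγ0 : γ = 0
    · -- then 1 is a combination of u and u*u, contradicting independence
      have h1 : (-1 : F) • (1 : A) + α • u + β • (u * u) = 0 := by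
        rw [hγ0] at huv'
        simp only [zero_smul, add_zero] at huv'
        rw [add_assoc, huv']
        simp
      have := Fintype.linearIndependent_iff.mp hu ![(-1 : F), α, β] (by
        rw [Fin.sum_univ_three]
        simpa using h1)
      have := this 0
      simp at this
    · -- then u * (u*u) = (u*u) * u, so A is commutative
      have hkey : u * (u * u) = (u * u) * u := by
        exact smul_right_injective A hγ0 (add_left_cancel (huv'.trans hvu'.symm))
      have hcomm : ∀ a c : A, a * c = c * a := by
        have hflip : LinearMap.mul F A = (LinearMap.mul F A).flip := by
          apply b.ext; intro i
          apply LinearMap.ext; intro x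
          rw [← b.sum_repr x]
          simp only [Fin.sum_univ_three, map_add, map_smul, LinearMap.add_apply,
            LinearMap.smul_apply, LinearMap.flip_apply]
          congr 1
          · congr 1
            · congr 1
              fin_cases i <;> simp [hb 0, hb 1, hb 2, LinearMap.mul_apply', hkey]
            · congr 1
              fin_cases i <;> simp [hb 0, hb 1, hb 2, LinearMap.mul_apply', hkey]
          · congr 1
            fin_cases i <;> simp [hb 0, hb 1, hb 2, LinearMap.mul_apply', hkey]
        intro a c
        calc a * c = LinearMap.mul F A a c := rfl
          _ = (LinearMap.mul F A).flip a c := by rw [← hflip]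
          _ = c * a := rfl
      exact hnoncomm hcomm
end
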